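/- arXiv:nlin/0012020 — 4 statements merged into one kernel-verified Lean document; each statement's English description precedes it below -/
import Mathlib

section
/- The L^∞ norm of a smooth decaying NLCME solution grows at most exponentially: ‖(E₊,E₋)(T)‖_{L∞} ≤ ‖(E₊,E₋)(0)‖_{L∞} e^{|κ|T}. -/
open Set Complex MeasureTheory intervalIntegral

lemma nlcme_char_bound (v k g : ℝ) (A B : ℝ → ℝ → ℂ)
    (hA : ContDiff ℝ 1 (fun p : ℝ × ℝ => A p.1 p.2))
    (hB : Continuous (fun p : ℝ × ℝ => B p.1 p.2))
    (heq : ∀ Z T : ℝ, 0 ≤ T →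
      I * (deriv (fun s => A Z s) T + v * deriv (fun y => A y T) Z)
        + k * B Z T + g * ((‖A Z T‖ ^ 2 + 2 * ‖B Z T‖ ^ 2 : ℝ) : ℂ) * A Z T = 0)
    (Z T : ℝ) (hT : 0 ≤ T) :
    ‖A Z T‖ ≤ ‖A (Z - v * T) 0‖ + |k| * ∫ s in (0:ℝ)..T, ‖B (Z - v * (T - s)) s‖ := by
  classical
  set F : ℝ × ℝ → ℂ := fun p => A p.1 p.2 with hF_def
  have hFdiff : Differentiable ℝ F := hA.differentiable one_ne_zero
  set up : ℝ → ℂ := fun t => A (Z - v * (T - t)) t with hup_def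
  set em : ℝ → ℂ := fun t => B (Z - v * (T - t)) t with hem_def
  set rr : ℝ → ℝ := fun t => ‖up t‖ ^ 2 + 2 * ‖em t‖ ^ 2 with hrr_def
  have hγcont : Continuous (fun t : ℝ => ((Z - v * (T - t), t) : ℝ × ℝ)) := by fun_prop
  have hupc : Continuous up := hA.continuous.comp hγcont
  have hemc : Continuous em := hB.comp hγcont
  have hrrc : Continuous rr := by fun_prop
  -- derivative of up along the characteristic
  have hupD : ∀ t : ℝ, 0 ≤ t →
      HasDerivAt up (I * ((k : ℂ) * em t + (g : ℂ) * ((rr t : ℝ) : ℂ) * up t)) t := by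
    intro t ht
    have h1 : HasDerivAt (fun t : ℝ => Z - v * (T - t)) v t := by
      have := (((hasDerivAt_id t).const_sub T).const_mul v).const_sub Z
      simpa using this
    have hγ : HasDerivAt (fun t : ℝ => ((Z - v * (T - t), t) : ℝ × ℝ)) ((v, 1) : ℝ × ℝ) t :=
      h1.prodMk (hasDerivAt_id t)
    have hFd : HasFDerivAt F (fderiv ℝ F ((Z - v * (T - t), t) : ℝ × ℝ))
        ((Z - v * (T - t), t) : ℝ × ℝ) := (hFdiff _).hasFDerivAt
    have hupd : HasDerivAt up (fderiv ℝ F ((Z - v * (T - t), t) : ℝ × ℝ) (v, 1)) t := by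
      have h0 := hFd.comp_hasDerivAt_of_eq t hγ rfl
      exact h0
    have hpT : HasDerivAt (fun s => A (Z - v * (T - t)) s)
        (fderiv ℝ F ((Z - v * (T - t), t) : ℝ × ℝ) ((0, 1) : ℝ × ℝ)) t := by
      have hc : HasDerivAt (fun s : ℝ => ((Z - v * (T - t), s) : ℝ × ℝ)) ((0, 1) : ℝ × ℝ) t :=
        (hasDerivAt_const t _).prodMk (hasDerivAt_id t)
      exact hFd.comp_hasDerivAt_of_eq t hc rfl
    have hpZ : HasDerivAt (fun y => A y t)
        (fderiv ℝ F ((Z - v * (T - t), t) : ℝ × ℝ) ((1, 0) : ℝ × ℝ)) (Z - v * (T - t)) := by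
      have hc : HasDerivAt (fun y : ℝ => ((y, t) : ℝ × ℝ)) ((1, 0) : ℝ × ℝ) (Z - v * (T - t)) :=
        (hasDerivAt_id _).prodMk (hasDerivAt_const _ t)
      exact hFd.comp_hasDerivAt_of_eq (Z - v * (T - t)) hc rfl
    have hsplit : fderiv ℝ F ((Z - v * (T - t), t) : ℝ × ℝ) ((v, 1) : ℝ × ℝ)
        = fderiv ℝ F ((Z - v * (T - t), t) : ℝ × ℝ) ((0, 1) : ℝ × ℝ)
          + v • fderiv ℝ F ((Z - v * (T - t), t) : ℝ × ℝ) ((1, 0) : ℝ × ℝ) := by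
      have h2 : ((v, 1) : ℝ × ℝ) = (0, 1) + v • ((1, 0) : ℝ × ℝ) := by
        simp [Prod.ext_iff]
      rw [h2, map_add, ContinuousLinearMap.map_smul]
    have heqt := heq (Z - v * (T - t)) t ht
    rw [hpT.deriv, hpZ.deriv] at heqt
    have hval : fderiv ℝ F ((Z - v * (T - t), t) : ℝ × ℝ) ((v, 1) : ℝ × ℝ)
        = I * ((k : ℂ) * em t + (g : ℂ) * ((rr t : ℝ) : ℂ) * up t) := by
      rw [hsplit]
      have hrre : ((rr t : ℝ) : ℂ)
          = ((‖A (Z - v * (T - t)) t‖ ^ 2 + 2 * ‖B (Z - v * (T - t)) t‖ ^ 2 : ℝ) : ℂ) := rfl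
      have hsm : (v • fderiv ℝ F ((Z - v * (T - t), t) : ℝ × ℝ) ((1, 0) : ℝ × ℝ))
          = (v : ℂ) * fderiv ℝ F ((Z - v * (T - t), t) : ℝ × ℝ) ((1, 0) : ℝ × ℝ) := by
        simp [Complex.real_smul]
      have hup_eq : up t = A (Z - v * (T - t)) t := rfl
      have hem_eq : em t = B (Z - v * (T - t)) t := rfl
      rw [hrre, hsm, hup_eq, hem_eq]
      linear_combination (-I) * heqt +
        (fderiv ℝ F ((Z - v * (T - t), t) : ℝ × ℝ) ((0, 1) : ℝ × ℝ)
          + (v : ℂ) * fderiv ℝ F ((Z - v * (T - t), t) : ℝ × ℝ) ((1, 0) : ℝ × ℝ)) * Complex.I_sq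
    rw [hval] at hupd
    exact hupd
  -- the phase
  set θ : ℝ → ℝ := fun t => ∫ s in (0:ℝ)..t, rr s with hθ_def
  have hθD : ∀ t : ℝ, HasDerivAt θ (rr t) t := fun t =>
    (hrrc.integral_hasStrictDerivAt 0 t).hasDerivAt
  have hθc : Continuous θ := continuous_iff_continuousAt.mpr
    fun t => (hθD t).differentiableAt.continuousAt
  set φ : ℝ → ℂ := fun t => Complex.exp (((-g * θ t : ℝ) : ℂ) * I) with hφ_def
  have hφc : Continuous φ :=
    Complex.continuous_exp.comp
      ((Complex.continuous_ofReal.comp (continuous_const.mul hθc)).mul continuous_const)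
  have hφnorm : ∀ t, ‖φ t‖ = 1 := by
    intro t
    simp [hφ_def, Complex.norm_exp]
  set w : ℝ → ℂ := fun t => φ t * up t with hw_def
  set wd : ℝ → ℂ := fun t => φ t * (I * (k : ℂ) * em t) with hwd_def
  have hwD : ∀ t : ℝ, 0 ≤ t → HasDerivAt w (wd t) t := by
    intro t ht
    have hphase : HasDerivAt (fun t : ℝ => (((-g * θ t : ℝ) : ℂ) * I))
        ((((-g * rr t : ℝ)) : ℂ) * I) t := by
      have h1 : HasDerivAt (fun t : ℝ => -g * θ t) (-g * rr t) t := (hθD t).const_mul (-g)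
      exact (h1.ofReal_comp).mul_const I
    have hφD : HasDerivAt φ (φ t * ((((-g * rr t : ℝ)) : ℂ) * I)) t := hphase.cexp
    have hmul := hφD.mul (hupD t ht)
    have harr : φ t * ((((-g * rr t : ℝ)) : ℂ) * I) * up t
        + φ t * (I * ((k : ℂ) * em t + (g : ℂ) * ((rr t : ℝ) : ℂ) * up t))
        = φ t * (I * (k : ℂ) * em t) := by
      push_cast
      ring
    rw [harr] at hmul
    exact hmul
  have hwd_c : Continuous wd := hφc.mul (continuous_const.mul hemc)
  have hFTC : ∫ t in (0:ℝ)..T, wd t = w T - w 0 := by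
    apply integral_eq_sub_of_hasDerivAt
    · intro t htmem
      rw [uIcc_of_le hT] at htmem
      exact hwD t htmem.1
    · exact hwd_c.intervalIntegrable 0 T
  have hw0 : w 0 = up 0 := by
    simp [hw_def, hφ_def, hθ_def, intervalIntegral.integral_same]
  have hnormw : ∀ t, ‖w t‖ = ‖up t‖ := by
    intro t
    rw [hw_def]
    simp only [norm_mul, hφnorm, one_mul]
  have hup0 : up 0 = A (Z - v * T) 0 := by simp [hup_def]
  have hbound : ∀ t ∈ Icc (0:ℝ) T, ‖wd t‖ = |k| * ‖B (Z - v * (T - t)) t‖ := by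
    intro t _
    have : ‖wd t‖ = ‖φ t‖ * (‖I‖ * ‖(k : ℂ)‖ * ‖em t‖) := by
      simp [hwd_def, norm_mul]
    rw [this, hφnorm]
    simp [Complex.norm_I, Complex.norm_real, Real.norm_eq_abs, hem_def]
  have hATeq : ‖A Z T‖ = ‖up T‖ := by
    have : up T = A Z T := by simp [hup_def]
    rw [this]
  calc ‖A Z T‖ = ‖w T‖ := by rw [hATeq, hnormw]
    _ = ‖w 0 + (w T - w 0)‖ := by congr 1; ring
    _ ≤ ‖w 0‖ + ‖w T - w 0‖ := norm_add_le _ _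
    _ = ‖A (Z - v * T) 0‖ + ‖∫ t in (0:ℝ)..T, wd t‖ := by
        rw [hFTC]
        congr 1
        rw [hw0, hup0]
    _ ≤ ‖A (Z - v * T) 0‖ + ∫ t in (0:ℝ)..T, ‖wd t‖ := by
        gcongr
        exact norm_integral_le_integral_norm hT
    _ = ‖A (Z - v * T) 0‖ + ∫ t in (0:ℝ)..T, |k| * ‖B (Z - v * (T - t)) t‖ := by
        congr 1
        apply integral_congr
        intro t htmem
        rw [uIcc_of_le hT] at htmem
        exact hbound t htmem
    _ = ‖A (Z - v * T) 0‖ + |k| * ∫ t in (0:ℝ)..T, ‖B (Z - v * (T - t)) t‖ := by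
        rw [intervalIntegral.integral_const_mul]

lemma nlcme_int_phi (a M C : ℝ) (n : ℕ) (t : ℝ) :
    M + a * (∫ s in (0:ℝ)..t,
        (M * (∑ j ∈ Finset.range n, (a*s)^j / (Nat.factorial j)) + C * (a*s)^n / (Nat.factorial n)))
      = M * (∑ j ∈ Finset.range (n+1), (a*t)^j / (Nat.factorial j))
        + C * (a*t)^(n+1) / (Nat.factorial (n+1)) := by
  have hint : (∫ s in (0:ℝ)..t,
        (M * (∑ j ∈ Finset.range n, (a*s)^j / (Nat.factorial j)) + C * (a*s)^n / (Nat.factorial n)))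
      = (∑ j ∈ Finset.range n, M * a^j / (Nat.factorial j) * (t^(j+1)/(j+1)))
        + C * a^n / (Nat.factorial n) * (t^(n+1)/(n+1)) := by
    have hcongr : ∀ s : ℝ,
        M * (∑ j ∈ Finset.range n, (a*s)^j / (Nat.factorial j)) + C * (a*s)^n / (Nat.factorial n)
        = (∑ j ∈ Finset.range n, (M * a^j / (Nat.factorial j)) * s^j)
          + (C * a^n / (Nat.factorial n)) * s^n := by
      intro s
      rw [Finset.mul_sum]
      rw [mul_pow]
      congr 1
      · apply Finset.sum_congr rfl
        intro j _
        rw [mul_pow]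
        ring
      · ring
    simp only [hcongr]
    rw [intervalIntegral.integral_add]
    · rw [intervalIntegral.integral_finset_sum]
      · simp only [intervalIntegral.integral_const_mul, integral_pow]
        congr 1
        · apply Finset.sum_congr rfl
          intro j _
          push_cast
          ring
        · push_cast
          ring
      · intro j _
        apply Continuous.intervalIntegrable
        fun_prop
    · apply Continuous.intervalIntegrable; fun_prop
    · apply Continuous.intervalIntegrable; fun_prop
  rw [hint]
  rw [Finset.sum_range_succ']
  rw [mul_add, Finset.mul_sum, mul_add, Finset.mul_sum]
  have h0 : M * ((a*t)^0 / (Nat.factorial 0 : ℝ)) = M := by norm_num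
  rw [h0]
  have hterm : ∀ j ∈ Finset.range n,
      a * (M * a^j / (Nat.factorial j) * (t^(j+1)/(j+1)))
      = M * ((a*t)^(j+1) / (Nat.factorial (j+1) : ℝ)) := by
    intro j _
    have hfac : ((Nat.factorial (j+1) : ℝ)) = (j+1) * (Nat.factorial j : ℝ) := by
      rw [Nat.factorial_succ]; push_cast; ring
    rw [hfac, mul_pow]
    have h1 : (Nat.factorial j : ℝ) ≠ 0 := Nat.cast_ne_zero.mpr (Nat.factorial_ne_zero j)
    have h2 : ((j:ℝ)+1) ≠ 0 := by positivity
    field_simp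
    ring
  have hlast : a * (C * a^n / (Nat.factorial n) * (t^(n+1)/(n+1)))
      = C * (a*t)^(n+1) / (Nat.factorial (n+1)) := by
    have hfac : ((Nat.factorial (n+1) : ℝ)) = (n+1) * (Nat.factorial n : ℝ) := by
      rw [Nat.factorial_succ]; push_cast; ring
    rw [hfac, mul_pow]
    have h1 : (Nat.factorial n : ℝ) ≠ 0 := Nat.cast_ne_zero.mpr (Nat.factorial_ne_zero n)
    have h2 : ((n:ℝ)+1) ≠ 0 := by positivity
    field_simp
    ring
  rw [hlast]
  rw [Finset.sum_congr rfl hterm]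
  ring

set_option maxHeartbeats 2000000 in
/-- The `L∞` norm of a smooth decaying NLCME solution grows at most
exponentially: `‖(E₊,E₋)(T)‖_{L∞} ≤ ‖(E₊,E₋)(0)‖_{L∞} e^{|κ|T}`. -/
theorem nlcme_Linfty_bound
    (v_g κ Γ : ℝ)
    (Ep Em : ℝ → ℝ → ℂ)
    (hreg : ContDiff ℝ 1 (fun p : ℝ × ℝ => Ep p.1 p.2))
    (hreg' : ContDiff ℝ 1 (fun p : ℝ × ℝ => Em p.1 p.2))
    (heq1 : ∀ Z T : ℝ, 0 ≤ T →
      I * (deriv (fun s => Ep Z s) T + v_g * deriv (fun y => Ep y T) Z)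
        + κ * Em Z T
        + Γ * ((‖Ep Z T‖ ^ 2 + 2 * ‖Em Z T‖ ^ 2 : ℝ) : ℂ) * Ep Z T = 0)
    (heq2 : ∀ Z T : ℝ, 0 ≤ T →
      I * (deriv (fun s => Em Z s) T - v_g * deriv (fun y => Em y T) Z)
        + κ * Ep Z T
        + Γ * ((‖Em Z T‖ ^ 2 + 2 * ‖Ep Z T‖ ^ 2 : ℝ) : ℂ) * Em Z T = 0)
    (hint : ∀ T : ℝ, 0 ≤ T → ∀ p : ℝ, 2 ≤ p →
      Integrable (fun Z => ‖Ep Z T‖ ^ p + ‖Em Z T‖ ^ p))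
    (hdecay : ∀ T : ℝ, 0 ≤ T →
      Filter.Tendsto (fun Z => ‖Ep Z T‖ + ‖Em Z T‖) Filter.atTop (nhds 0) ∧
      Filter.Tendsto (fun Z => ‖Ep Z T‖ + ‖Em Z T‖) Filter.atBot (nhds 0))
    (M₀ : ℝ) (hM₀ : ∀ Z : ℝ, max ‖Ep Z 0‖ ‖Em Z 0‖ ≤ M₀) :
    ∀ T : ℝ, 0 ≤ T → ∀ Z : ℝ,
      max ‖Ep Z T‖ ‖Em Z T‖ ≤ M₀ * Real.exp (|κ| * T) := by
  intro T₀ hT₀ Z₀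
  have hM0 : 0 ≤ M₀ :=
    le_trans (le_trans (norm_nonneg _) (le_max_left ‖Ep 0 0‖ ‖Em 0 0‖)) (hM₀ 0)
  set c := |v_g| * T₀ with hc_def
  have hc0 : 0 ≤ c := by positivity
  have hcontg : Continuous (fun p : ℝ × ℝ => max ‖Ep p.1 p.2‖ ‖Em p.1 p.2‖) :=
    (hreg.continuous.norm).max (hreg'.continuous.norm)
  have hK : IsCompact ((Icc (Z₀ - c) (Z₀ + c)) ×ˢ (Icc (0:ℝ) T₀)) :=
    isCompact_Icc.prod isCompact_Icc
  have hKne : ((Icc (Z₀ - c) (Z₀ + c)) ×ˢ (Icc (0:ℝ) T₀)).Nonempty :=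
    ⟨(Z₀, 0), ⟨⟨by linarith, by linarith⟩, ⟨le_refl _, hT₀⟩⟩⟩
  obtain ⟨p₀, hp₀K, hp₀max⟩ := hK.exists_isMaxOn hKne hcontg.continuousOn
  set C := max ‖Ep p₀.1 p₀.2‖ ‖Em p₀.1 p₀.2‖ with hC_def
  have hCb : ∀ Z t : ℝ, Z ∈ Icc (Z₀ - c) (Z₀ + c) → t ∈ Icc (0:ℝ) T₀ →
      max ‖Ep Z t‖ ‖Em Z t‖ ≤ C := fun Z t hZ ht => hp₀max (Set.mk_mem_prod hZ ht)
  have L1 : ∀ Z T : ℝ, 0 ≤ T → ‖Ep Z T‖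
      ≤ ‖Ep (Z - v_g * T) 0‖ + |κ| * ∫ s in (0:ℝ)..T, ‖Em (Z - v_g * (T - s)) s‖ :=
    nlcme_char_bound v_g κ Γ Ep Em hreg hreg'.continuous heq1
  have heq2' : ∀ Z T : ℝ, 0 ≤ T →
      I * (deriv (fun s => Em Z s) T + (-v_g : ℝ) * deriv (fun y => Em y T) Z)
        + κ * Ep Z T + Γ * ((‖Em Z T‖ ^ 2 + 2 * ‖Ep Z T‖ ^ 2 : ℝ) : ℂ) * Em Z T = 0 := by
    intro Z T h
    have h2 := heq2 Z T h
    push_cast at h2 ⊢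
    linear_combination h2
  have L2 : ∀ Z T : ℝ, 0 ≤ T → ‖Em Z T‖
      ≤ ‖Em (Z - (-v_g) * T) 0‖ + |κ| * ∫ s in (0:ℝ)..T, ‖Ep (Z - (-v_g) * (T - s)) s‖ :=
    nlcme_char_bound (-v_g) κ Γ Em Ep hreg' hreg.continuous heq2'
  have hEpc : Continuous (fun p : ℝ × ℝ => Ep p.1 p.2) := hreg.continuous
  have hEmc : Continuous (fun p : ℝ × ℝ => Em p.1 p.2) := hreg'.continuous
  have main : ∀ n : ℕ, ∀ t : ℝ, 0 ≤ t → t ≤ T₀ → ∀ Z : ℝ, |Z - Z₀| ≤ |v_g| * (T₀ - t) →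
      max ‖Ep Z t‖ ‖Em Z t‖
        ≤ M₀ * (∑ j ∈ Finset.range n, (|κ| * t)^j / (Nat.factorial j))
          + C * (|κ| * t)^n / (Nat.factorial n) := by
    intro n
    induction n with
    | zero =>
      intro t ht0 htT Z hZ
      have h1 : |v_g| * (T₀ - t) ≤ c := by
        rw [hc_def]
        apply mul_le_mul_of_nonneg_left _ (abs_nonneg v_g)
        linarith
      rw [abs_le] at hZ
      have hZK : Z ∈ Icc (Z₀ - c) (Z₀ + c) :=
        ⟨by linarith [hZ.1], by linarith [hZ.2]⟩
      have hC' := hCb Z t hZK ⟨ht0, htT⟩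
      have hrhs : M₀ * (∑ j ∈ Finset.range 0, (|κ| * t)^j / (Nat.factorial j))
          + C * (|κ| * t)^0 / (Nat.factorial 0) = C := by
        norm_num
      rw [hrhs]
      exact hC'
    | succ n ih =>
      intro t ht0 htT Z hZ
      have hcone : ∀ u : ℝ, |u| = |v_g| → ∀ s : ℝ, 0 ≤ s → s ≤ t →
          |Z - u * (t - s) - Z₀| ≤ |v_g| * (T₀ - s) := by
        intro u hu s hs1 hs2
        have he : Z - u * (t - s) - Z₀ = (Z - Z₀) + (-(u * (t - s))) := by ring
        rw [he]
        refine (abs_add_le _ _).trans ?_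
        rw [abs_neg, abs_mul, _root_.abs_of_nonneg (by linarith : (0:ℝ) ≤ t - s), hu]
        have hr : |v_g| * (T₀ - t) + |v_g| * (t - s) = |v_g| * (T₀ - s) := by ring
        linarith
      set ψ : ℝ → ℝ := fun s =>
        M₀ * (∑ j ∈ Finset.range n, (|κ| * s)^j / (Nat.factorial j))
          + C * (|κ| * s)^n / (Nat.factorial n) with hψ_def
      have hψc : Continuous ψ := by fun_prop
      have hgoal : ∀ x : ℝ, x ≤ M₀ + |κ| * ∫ s in (0:ℝ)..t, ψ s →
          x ≤ M₀ * (∑ j ∈ Finset.range (n+1), (|κ| * t)^j / (Nat.factorial j))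
            + C * (|κ| * t)^(n+1) / (Nat.factorial (n+1)) := by
        intro x hx
        calc x ≤ M₀ + |κ| * ∫ s in (0:ℝ)..t, ψ s := hx
          _ = _ := nlcme_int_phi (|κ|) M₀ C n t
      refine max_le ?_ ?_
      · -- Ep branch
        apply hgoal
        have hintg : Continuous (fun s : ℝ => ‖Em (Z - v_g * (t - s)) s‖) := by
          have hcv : Continuous (fun s : ℝ => ((Z - v_g * (t - s), s) : ℝ × ℝ)) := by fun_prop
          exact (hEmc.comp hcv).norm
        have hmono : ∫ s in (0:ℝ)..t, ‖Em (Z - v_g * (t - s)) s‖ ≤ ∫ s in (0:ℝ)..t, ψ s := by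
          apply intervalIntegral.integral_mono_on ht0
            (hintg.intervalIntegrable 0 t) (hψc.intervalIntegrable 0 t)
          intro s hs
          refine le_trans (le_max_right ‖Ep (Z - v_g * (t - s)) s‖ ‖Em (Z - v_g * (t - s)) s‖) ?_
          exact ih s hs.1 (le_trans hs.2 htT) _ (hcone v_g rfl s hs.1 hs.2)
        calc ‖Ep Z t‖ ≤ ‖Ep (Z - v_g * t) 0‖
              + |κ| * ∫ s in (0:ℝ)..t, ‖Em (Z - v_g * (t - s)) s‖ := L1 Z t ht0
          _ ≤ M₀ + |κ| * ∫ s in (0:ℝ)..t, ψ s := by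
              apply add_le_add
              · exact le_trans (le_max_left _ ‖Em (Z - v_g * t) 0‖) (hM₀ _)
              · exact mul_le_mul_of_nonneg_left hmono (abs_nonneg κ)
      · -- Em branch
        apply hgoal
        have hintg : Continuous (fun s : ℝ => ‖Ep (Z - (-v_g) * (t - s)) s‖) := by
          have hcv : Continuous (fun s : ℝ => ((Z - (-v_g) * (t - s), s) : ℝ × ℝ)) := by fun_prop
          exact (hEpc.comp hcv).norm
        have hmono : ∫ s in (0:ℝ)..t, ‖Ep (Z - (-v_g) * (t - s)) s‖
            ≤ ∫ s in (0:ℝ)..t, ψ s := by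
          apply intervalIntegral.integral_mono_on ht0
            (hintg.intervalIntegrable 0 t) (hψc.intervalIntegrable 0 t)
          intro s hs
          refine le_trans (le_max_left ‖Ep (Z - (-v_g) * (t - s)) s‖ ‖Em (Z - (-v_g) * (t - s)) s‖) ?_
          exact ih s hs.1 (le_trans hs.2 htT) _ (hcone (-v_g) (abs_neg v_g) s hs.1 hs.2)
        calc ‖Em Z t‖ ≤ ‖Em (Z - (-v_g) * t) 0‖
              + |κ| * ∫ s in (0:ℝ)..t, ‖Ep (Z - (-v_g) * (t - s)) s‖ := L2 Z t ht0
          _ ≤ M₀ + |κ| * ∫ s in (0:ℝ)..t, ψ s := by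
              apply add_le_add
              · exact le_trans (le_max_right ‖Ep (Z - (-v_g) * t) 0‖ _) (hM₀ _)
              · exact mul_le_mul_of_nonneg_left hmono (abs_nonneg κ)
  have hseq : ∀ n : ℕ, max ‖Ep Z₀ T₀‖ ‖Em Z₀ T₀‖
      ≤ M₀ * Real.exp (|κ| * T₀) + C * (|κ| * T₀)^n / (Nat.factorial n) := by
    intro n
    refine (main n T₀ hT₀ le_rfl Z₀ (by simp)).trans ?_
    have hsum := Real.sum_le_exp_of_nonneg (by positivity : (0:ℝ) ≤ |κ| * T₀) n
    exact add_le_add (mul_le_mul_of_nonneg_left hsum hM0) le_rfl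
  have hlim : Filter.Tendsto
      (fun n : ℕ => M₀ * Real.exp (|κ| * T₀) + C * (|κ| * T₀)^n / (Nat.factorial n))
      Filter.atTop (nhds (M₀ * Real.exp (|κ| * T₀))) := by
    have h := (FloorSemiring.tendsto_pow_div_factorial_atTop (|κ| * T₀)).const_mul C
    have h3 := Filter.Tendsto.add
      (tendsto_const_nhds : Filter.Tendsto (fun _ : ℕ => M₀ * Real.exp (|κ| * T₀))
        Filter.atTop (nhds (M₀ * Real.exp (|κ| * T₀)))) h
    simpa [mul_div_assoc] using h3
  exact ge_of_tendsto' hlim hseq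
end

section
/- Under Hypothesis N1 on the nonlinearity (|g(P,z)| + |∂_z g(P,z)| ≤ C|P| and |∂_P g(P,z)| ≤ C), the energy E(t) = ½∫(E² + B² + P²/(n²−1) + Q²/(ω₀²(n²−1)))dz of a solution to the first-order AMLE system satisfies dE/dt ≤ C₁∫(P² + Q²)dz, and hence by Gronwall ‖u(t)‖_{L²} ≤ ‖u(0)‖_{L²}e^{C₁t}. -/
open Set MeasureTheory
noncomputable section AMLEaux

/-! ### partial derivative helpers -/

def pdz (f : ℝ → ℝ → ℝ) (z s : ℝ) : ℝ :=
  fderiv ℝ (fun p : ℝ × ℝ => f p.1 p.2) (z, s) (1, 0)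

def pdt (f : ℝ → ℝ → ℝ) (z s : ℝ) : ℝ :=
  fderiv ℝ (fun p : ℝ × ℝ => f p.1 p.2) (z, s) (0, 1)

theorem hasDerivAt_pdz {f : ℝ → ℝ → ℝ}
    (hf : ContDiff ℝ 1 (fun p : ℝ × ℝ => f p.1 p.2)) (z s : ℝ) :
    HasDerivAt (fun y => f y s) (pdz f z s) z := by
  have h1 : HasFDerivAt (fun p : ℝ × ℝ => f p.1 p.2)
      (fderiv ℝ (fun p : ℝ × ℝ => f p.1 p.2) (z, s)) (z, s) :=
    (hf.differentiable one_ne_zero (z, s)).hasFDerivAt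
  have h2 : HasDerivAt (fun y : ℝ => (y, s)) ((1 : ℝ), (0 : ℝ)) z :=
    (hasDerivAt_id z).prodMk (hasDerivAt_const z s)
  exact h1.comp_hasDerivAt z h2

theorem hasDerivAt_pdt {f : ℝ → ℝ → ℝ}
    (hf : ContDiff ℝ 1 (fun p : ℝ × ℝ => f p.1 p.2)) (z s : ℝ) :
    HasDerivAt (fun u => f z u) (pdt f z s) s := by
  have h1 : HasFDerivAt (fun p : ℝ × ℝ => f p.1 p.2)
      (fderiv ℝ (fun p : ℝ × ℝ => f p.1 p.2) (z, s)) (z, s) :=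
    (hf.differentiable one_ne_zero (z, s)).hasFDerivAt
  have h2 : HasDerivAt (fun u : ℝ => (z, u)) ((0 : ℝ), (1 : ℝ)) s :=
    (hasDerivAt_const s z).prodMk (hasDerivAt_id s)
  exact h1.comp_hasDerivAt s h2

theorem continuous_pdz {f : ℝ → ℝ → ℝ}
    (hf : ContDiff ℝ 1 (fun p : ℝ × ℝ => f p.1 p.2)) :
    Continuous fun p : ℝ × ℝ => pdz f p.1 p.2 := by
  have h := hf.continuous_fderiv one_ne_zero
  have : Continuous fun p : ℝ × ℝ =>
      (fderiv ℝ (fun q : ℝ × ℝ => f q.1 q.2) p) ((1 : ℝ), (0 : ℝ)) :=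
    h.clm_apply continuous_const
  simpa [pdz] using this

theorem continuous_pdt {f : ℝ → ℝ → ℝ}
    (hf : ContDiff ℝ 1 (fun p : ℝ × ℝ => f p.1 p.2)) :
    Continuous fun p : ℝ × ℝ => pdt f p.1 p.2 := by
  have h := hf.continuous_fderiv one_ne_zero
  have : Continuous fun p : ℝ × ℝ =>
      (fderiv ℝ (fun q : ℝ × ℝ => f q.1 q.2) p) ((0 : ℝ), (1 : ℝ)) :=
    h.clm_apply continuous_const
  simpa [pdt] using this
noncomputable section PHI

/-! ### a smooth nonincreasing cutoff with explicitly bounded derivative -/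

def ζf (t : ℝ) : ℝ := Real.smoothTransition t * Real.smoothTransition (1 - t)

theorem ζf_cont : Continuous ζf :=
  Real.smoothTransition.continuous.mul
    (Real.smoothTransition.continuous.comp (continuous_const.sub continuous_id))

theorem ζf_nonneg (t : ℝ) : 0 ≤ ζf t :=
  mul_nonneg (Real.smoothTransition.nonneg _) (Real.smoothTransition.nonneg _)

theorem ζf_le_one (t : ℝ) : ζf t ≤ 1 :=
  mul_le_one₀ (Real.smoothTransition.le_one _) (Real.smoothTransition.nonneg _)
    (Real.smoothTransition.le_one _)

theorem ζf_zero_of_nonpos {t : ℝ} (h : t ≤ 0) : ζf t = 0 := by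
  simp [ζf, Real.smoothTransition.zero_of_nonpos h]

theorem ζf_zero_of_one_le {t : ℝ} (h : 1 ≤ t) : ζf t = 0 := by
  simp [ζf, Real.smoothTransition.zero_of_nonpos (by linarith : 1 - t ≤ 0)]

theorem ζf_intInt (a b : ℝ) : IntervalIntegrable ζf volume a b :=
  ζf_cont.intervalIntegrable a b

def Cζ : ℝ := ∫ t in (0:ℝ)..1, ζf t

theorem Cζ_pos : 0 < Cζ := by
  apply intervalIntegral.intervalIntegral_pos_of_pos_on (ζf_intInt 0 1) _ one_pos
  intro x hx
  exact mul_pos (Real.smoothTransition.pos_of_pos hx.1)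
    (Real.smoothTransition.pos_of_pos (by linarith [hx.2]))

def φf (x : ℝ) : ℝ := 1 - (∫ t in (0:ℝ)..x, ζf t) / Cζ

def φf' (x : ℝ) : ℝ := -(ζf x / Cζ)

theorem hasDerivAt_φf (x : ℝ) : HasDerivAt φf (φf' x) x := by
  have h : HasDerivAt (fun y => ∫ t in (0:ℝ)..y, ζf t) (ζf x) x :=
    intervalIntegral.integral_hasDerivAt_right (ζf_intInt 0 x)
      (ζf_cont.stronglyMeasurableAtFilter _ _) ζf_cont.continuousAt
  have h2 := (h.const_mul (Cζ)⁻¹).const_sub 1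
  have : φf = fun y => 1 - Cζ⁻¹ * ∫ t in (0:ℝ)..y, ζf t := by
    funext y; simp [φf, div_eq_mul_inv, mul_comm]
  rw [this]
  refine h2.congr_deriv ?_
  simp [φf', div_eq_mul_inv, mul_comm]

theorem φf_cont : Continuous φf := by
  have : Differentiable ℝ φf := fun x => (hasDerivAt_φf x).differentiableAt
  exact this.continuous

theorem φf'_cont : Continuous φf' := (ζf_cont.div_const _).neg

theorem φf'_nonpos (x : ℝ) : φf' x ≤ 0 :=
  neg_nonpos.2 (div_nonneg (ζf_nonneg x) Cζ_pos.le)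

theorem φf'_abs_le (x : ℝ) : |φf' x| ≤ 1 / Cζ := by
  rw [φf', abs_neg, abs_of_nonneg (div_nonneg (ζf_nonneg x) Cζ_pos.le), one_div]
  rw [div_eq_mul_inv]
  have := ζf_le_one x
  nlinarith [inv_nonneg.2 Cζ_pos.le, ζf_nonneg x]

theorem intζ_zero_of_nonpos {x : ℝ} (h : x ≤ 0) : (∫ t in (0:ℝ)..x, ζf t) = 0 := by
  rw [intervalIntegral.integral_symm, neg_eq_zero]
  have : EqOn ζf 0 (uIcc x 0) := by
    intro t ht
    rw [uIcc_of_le h] at ht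
    exact ζf_zero_of_nonpos ht.2
  rw [intervalIntegral.integral_congr this]
  simp

theorem intζ_eq_of_one_le {x : ℝ} (h : 1 ≤ x) : (∫ t in (0:ℝ)..x, ζf t) = Cζ := by
  have hsplit := intervalIntegral.integral_add_adjacent_intervals
    (ζf_intInt 0 1) (ζf_intInt 1 x)
  have h2 : (∫ t in (1:ℝ)..x, ζf t) = 0 := by
    have : EqOn ζf 0 (uIcc 1 x) := by
      intro t ht
      rw [uIcc_of_le h] at ht
      exact ζf_zero_of_one_le ht.1
    rw [intervalIntegral.integral_congr this]; simp
  rw [h2] at hsplit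
  simpa [Cζ] using hsplit.symm

theorem intζ_nonneg (x : ℝ) : 0 ≤ ∫ t in (0:ℝ)..x, ζf t := by
  rcases le_or_gt x 0 with h | h
  · rw [intζ_zero_of_nonpos h]
  · exact intervalIntegral.integral_nonneg h.le (fun t _ => ζf_nonneg t)

theorem intζ_le (x : ℝ) : (∫ t in (0:ℝ)..x, ζf t) ≤ Cζ := by
  rcases le_or_gt 1 x with h | h
  · rw [intζ_eq_of_one_le h]
  · rcases le_or_gt x 0 with h0 | h0
    · rw [intζ_zero_of_nonpos h0]; exact Cζ_pos.le
    · have hsplit := intervalIntegral.integral_add_adjacent_intervals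
        (ζf_intInt 0 x) (ζf_intInt x 1)
      have h2 : 0 ≤ ∫ t in x..1, ζf t :=
        intervalIntegral.integral_nonneg h.le (fun t _ => ζf_nonneg t)
      unfold Cζ
      linarith [hsplit]

theorem φf_one_of_nonpos {x : ℝ} (h : x ≤ 0) : φf x = 1 := by
  simp [φf, intζ_zero_of_nonpos h]

theorem φf_zero_of_one_le {x : ℝ} (h : 1 ≤ x) : φf x = 0 := by
  simp [φf, intζ_eq_of_one_le h, div_self Cζ_pos.ne']

theorem φf_nonneg (x : ℝ) : 0 ≤ φf x := by
  have := intζ_le x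
  have h := Cζ_pos
  simp only [φf, sub_nonneg]
  exact (div_le_one h).2 this

theorem φf_le_one (x : ℝ) : φf x ≤ 1 := by
  have := intζ_nonneg x
  have h := Cζ_pos
  simp only [φf]
  nlinarith [div_nonneg this h.le]

theorem φf_antitone : Antitone φf := by
  apply antitone_of_deriv_nonpos (fun x => (hasDerivAt_φf x).differentiableAt)
  intro x
  rw [(hasDerivAt_φf x).deriv]
  exact φf'_nonpos x

/-! ### space-time weights -/

theorem φf'_zero_of_nonpos {x : ℝ} (h : x ≤ 0) : φf' x = 0 := by
  simp [φf', ζf_zero_of_nonpos h]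

def ψ0 (R z : ℝ) : ℝ := φf (z - R) * φf (-z - R)

def ψw (R c : ℝ) (z s : ℝ) : ℝ := φf (z + (s - c) - R) * φf (-z + (s - c) - R)

def ψws (R c z s : ℝ) : ℝ :=
  φf' (z + (s - c) - R) * φf (-z + (s - c) - R)
    + φf (z + (s - c) - R) * φf' (-z + (s - c) - R)

def ψwz (R c z s : ℝ) : ℝ :=
  φf' (z + (s - c) - R) * φf (-z + (s - c) - R)
    - φf (z + (s - c) - R) * φf' (-z + (s - c) - R)

theorem ψ0_nonneg (R z : ℝ) : 0 ≤ ψ0 R z := mul_nonneg (φf_nonneg _) (φf_nonneg _)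

theorem ψ0_le_one (R z : ℝ) : ψ0 R z ≤ 1 :=
  mul_le_one₀ (φf_le_one _) (φf_nonneg _) (φf_le_one _)

theorem ψ0_mono {R R' : ℝ} (h : R ≤ R') (z : ℝ) : ψ0 R z ≤ ψ0 R' z :=
  mul_le_mul (φf_antitone (by linarith : z - R' ≤ z - R))
    (φf_antitone (by linarith : -z - R' ≤ -z - R)) (φf_nonneg _) (φf_nonneg _)

theorem ψ0_zero_far {R z : ℝ} (h : R + 1 ≤ |z|) : ψ0 R z = 0 := by
  unfold ψ0
  rcases abs_cases z with ⟨he, _⟩ | ⟨he, _⟩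
  · rw [φf_zero_of_one_le (by rw [he] at h; linarith : 1 ≤ z - R), zero_mul]
  · rw [φf_zero_of_one_le (by rw [he] at h; linarith : 1 ≤ -z - R), mul_zero]

theorem ψ0_cont (R : ℝ) : Continuous fun z => ψ0 R z :=
  (φf_cont.comp (continuous_id.sub continuous_const)).mul
    (φf_cont.comp (continuous_id.neg.sub continuous_const))

theorem ψ0_tendsto (z : ℝ) : Filter.Tendsto (fun R => ψ0 R z) Filter.atTop (nhds 1) := by
  apply Filter.Tendsto.congr' _ tendsto_const_nhds
  filter_upwards [Filter.eventually_ge_atTop (max z (-z))] with R hR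
  rw [ψ0, φf_one_of_nonpos (by simp at hR; linarith [hR.1] : z - R ≤ 0),
    φf_one_of_nonpos (by simp at hR; linarith [hR.2] : -z - R ≤ 0), mul_one]

theorem ψw_nonneg (R c z s : ℝ) : 0 ≤ ψw R c z s := mul_nonneg (φf_nonneg _) (φf_nonneg _)

theorem ψw_le_one (R c z s : ℝ) : ψw R c z s ≤ 1 :=
  mul_le_one₀ (φf_le_one _) (φf_nonneg _) (φf_le_one _)

theorem ψw_at_anchor (R c z : ℝ) : ψw R c z c = ψ0 R z := by simp [ψw, ψ0]

theorem ψw_at (R c b z : ℝ) : ψw R c z b = ψ0 (R - (b - c)) z := by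
  unfold ψw ψ0
  congr 1 <;> congr 1 <;> ring

theorem hasDerivAt_ψw_s (R c z s : ℝ) :
    HasDerivAt (fun u => ψw R c z u) (ψws R c z s) s := by
  have h1 : HasDerivAt (fun u : ℝ => z + (u - c) - R) 1 s := by
    simpa using (((hasDerivAt_id s).sub_const c).const_add z).sub_const R
  have h2 : HasDerivAt (fun u : ℝ => -z + (u - c) - R) 1 s := by
    simpa using (((hasDerivAt_id s).sub_const c).const_add (-z)).sub_const R
  have g1 : HasDerivAt (fun u => φf (z + (u - c) - R)) (φf' (z + (s - c) - R)) s := by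
    simpa [Function.comp_def] using (hasDerivAt_φf (z + (s - c) - R)).comp s h1
  have g2 : HasDerivAt (fun u => φf (-z + (u - c) - R)) (φf' (-z + (s - c) - R)) s := by
    simpa [Function.comp_def] using (hasDerivAt_φf (-z + (s - c) - R)).comp s h2
  exact g1.mul g2

theorem hasDerivAt_ψw_z (R c z s : ℝ) :
    HasDerivAt (fun y => ψw R c y s) (ψwz R c z s) z := by
  have h1 : HasDerivAt (fun y : ℝ => y + (s - c) - R) 1 z := by
    simpa using ((hasDerivAt_id z).add_const (s - c)).sub_const R
  have h2 : HasDerivAt (fun y : ℝ => -y + (s - c) - R) (-1) z := by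
    simpa using (((hasDerivAt_id z).neg).add_const (s - c)).sub_const R
  have g1 : HasDerivAt (fun y => φf (y + (s - c) - R)) (φf' (z + (s - c) - R)) z := by
    simpa [Function.comp_def] using (hasDerivAt_φf (z + (s - c) - R)).comp z h1
  have g2 : HasDerivAt (fun y => φf (-y + (s - c) - R)) (-φf' (-z + (s - c) - R)) z := by
    simpa [Function.comp_def] using (hasDerivAt_φf (-z + (s - c) - R)).comp z h2
  have := g1.mul g2
  have he : ψwz R c z s = φf' (z + (s - c) - R) * φf (-z + (s - c) - R)
      + φf (z + (s - c) - R) * -φf' (-z + (s - c) - R) := by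
    unfold ψwz; ring
  rw [he]
  exact this

theorem ψws_nonpos (R c z s : ℝ) : ψws R c z s ≤ 0 := by
  have := mul_nonpos_of_nonpos_of_nonneg (φf'_nonpos (z + (s - c) - R)) (φf_nonneg (-z + (s - c) - R))
  have := mul_nonpos_of_nonneg_of_nonpos (φf_nonneg (z + (s - c) - R)) (φf'_nonpos (-z + (s - c) - R))
  unfold ψws; linarith

theorem ψwz_abs_le (R c z s : ℝ) : |ψwz R c z s| ≤ -ψws R c z s := by
  have h1 := mul_nonpos_of_nonpos_of_nonneg (φf'_nonpos (z + (s - c) - R)) (φf_nonneg (-z + (s - c) - R))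
  have h2 := mul_nonpos_of_nonneg_of_nonpos (φf_nonneg (z + (s - c) - R)) (φf'_nonpos (-z + (s - c) - R))
  rw [abs_le]
  constructor <;> (unfold ψwz ψws; nlinarith)

theorem ψws_abs_le (R c z s : ℝ) : |ψws R c z s| ≤ 2 / Cζ := by
  have b1 := φf'_abs_le (z + (s - c) - R)
  have b2 := φf'_abs_le (-z + (s - c) - R)
  have c1 := φf_nonneg (-z + (s - c) - R); have c2 := φf_le_one (-z + (s - c) - R)
  have d1 := φf_nonneg (z + (s - c) - R); have d2 := φf_le_one (z + (s - c) - R)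
  have e1 : |φf' (z + (s - c) - R) * φf (-z + (s - c) - R)| ≤ 1 / Cζ := by
    rw [abs_mul, abs_of_nonneg c1]
    calc |φf' (z + (s - c) - R)| * φf (-z + (s - c) - R) ≤ (1/Cζ) * 1 :=
      mul_le_mul b1 c2 c1 (le_of_lt (by rw [one_div]; exact inv_pos.2 Cζ_pos))
    _ = 1 / Cζ := mul_one _
  have e2 : |φf (z + (s - c) - R) * φf' (-z + (s - c) - R)| ≤ 1 / Cζ := by
    rw [abs_mul, abs_of_nonneg d1]
    calc φf (z + (s - c) - R) * |φf' (-z + (s - c) - R)| ≤ 1 * (1/Cζ) :=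
      mul_le_mul d2 b2 (abs_nonneg _) one_pos.le
    _ = 1 / Cζ := one_mul _
  calc |ψws R c z s| ≤ _ := abs_add_le _ _
  _ ≤ 1 / Cζ + 1 / Cζ := add_le_add e1 e2
  _ = 2 / Cζ := by ring

theorem ψwz_abs_le' (R c z s : ℝ) : |ψwz R c z s| ≤ 2 / Cζ := by
  calc |ψwz R c z s| ≤ -ψws R c z s := ψwz_abs_le R c z s
  _ ≤ |ψws R c z s| := neg_le_abs _
  _ ≤ 2 / Cζ := ψws_abs_le R c z s

theorem ψw_zero_far {R c z s : ℝ} (h : R + 1 + |s - c| ≤ |z|) : ψw R c z s = 0 := by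
  unfold ψw
  have habs := neg_abs_le (s - c)
  rcases abs_cases z with ⟨he, _⟩ | ⟨he, _⟩
  · rw [he] at h
    rw [φf_zero_of_one_le (by nlinarith : 1 ≤ z + (s - c) - R), zero_mul]
  · rw [he] at h
    rw [φf_zero_of_one_le (by nlinarith : 1 ≤ -z + (s - c) - R), mul_zero]

theorem aff_cont (a b R : ℝ) : Continuous fun p : ℝ × ℝ => a * p.1 + (p.2 - b) - R := by
  fun_prop

theorem ψpiece_cont (f : ℝ → ℝ) (hf : Continuous f) (a c R : ℝ) :
    Continuous fun p : ℝ × ℝ => f (a * p.1 + (p.2 - c) - R) :=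
  hf.comp (aff_cont a c R)

theorem ψw_cont (R c : ℝ) : Continuous fun p : ℝ × ℝ => ψw R c p.1 p.2 := by
  unfold ψw
  have h1 := ψpiece_cont φf φf_cont 1 c R
  have h2 := ψpiece_cont φf φf_cont (-1) c R
  simp only [one_mul, neg_one_mul] at h1 h2
  exact h1.mul h2

theorem ψws_cont (R c : ℝ) : Continuous fun p : ℝ × ℝ => ψws R c p.1 p.2 := by
  unfold ψws
  have h1 := ψpiece_cont φf φf_cont 1 c R
  have h2 := ψpiece_cont φf φf_cont (-1) c R
  have h3 := ψpiece_cont φf' φf'_cont 1 c R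
  have h4 := ψpiece_cont φf' φf'_cont (-1) c R
  simp only [one_mul, neg_one_mul] at h1 h2 h3 h4
  exact (h3.mul h2).add (h1.mul h4)

theorem ψwz_cont (R c : ℝ) : Continuous fun p : ℝ × ℝ => ψwz R c p.1 p.2 := by
  unfold ψwz
  have h1 := ψpiece_cont φf φf_cont 1 c R
  have h2 := ψpiece_cont φf φf_cont (-1) c R
  have h3 := ψpiece_cont φf' φf'_cont 1 c R
  have h4 := ψpiece_cont φf' φf'_cont (-1) c R
  simp only [one_mul, neg_one_mul] at h1 h2 h3 h4
  exact (h3.mul h2).sub (h1.mul h4)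

theorem ψw_tendsto (c z s : ℝ) :
    Filter.Tendsto (fun R => ψw R c z s) Filter.atTop (nhds 1) := by
  apply Filter.Tendsto.congr' _ tendsto_const_nhds
  filter_upwards [Filter.eventually_ge_atTop (max (z + (s - c)) (-z + (s - c)))] with R hR
  simp only [ge_iff_le, max_le_iff] at hR
  rw [ψw, φf_one_of_nonpos (by linarith [hR.1]), φf_one_of_nonpos (by linarith [hR.2]), mul_one]

theorem ψws_tendsto (c z s : ℝ) :
    Filter.Tendsto (fun R => ψws R c z s) Filter.atTop (nhds 0) := by
  apply Filter.Tendsto.congr' _ tendsto_const_nhds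
  filter_upwards [Filter.eventually_ge_atTop (max (z + (s - c)) (-z + (s - c)))] with R hR
  simp only [ge_iff_le, max_le_iff] at hR
  rw [ψws, φf'_zero_of_nonpos (by linarith [hR.1]), φf'_zero_of_nonpos (by linarith [hR.2])]
  ring

theorem ψwz_tendsto (c z s : ℝ) :
    Filter.Tendsto (fun R => ψwz R c z s) Filter.atTop (nhds 0) := by
  apply Filter.Tendsto.congr' _ tendsto_const_nhds
  filter_upwards [Filter.eventually_ge_atTop (max (z + (s - c)) (-z + (s - c)))] with R hR
  simp only [ge_iff_le, max_le_iff] at hR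
  rw [ψwz, φf'_zero_of_nonpos (by linarith [hR.1]), φf'_zero_of_nonpos (by linarith [hR.2])]
  ring

/-! ### misc helpers -/

theorem φf'_zero_of_one_le {x : ℝ} (h : 1 ≤ x) : φf' x = 0 := by
  simp [φf', ζf_zero_of_one_le h]

theorem ψws_zero_far {R c z s : ℝ} (h : R + 1 + |s - c| ≤ |z|) : ψws R c z s = 0 := by
  unfold ψws
  have habs := neg_abs_le (s - c)
  rcases abs_cases z with ⟨he, _⟩ | ⟨he, _⟩
  · rw [he] at h
    rw [φf_zero_of_one_le (by nlinarith : 1 ≤ z + (s - c) - R),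
      φf'_zero_of_one_le (by nlinarith : 1 ≤ z + (s - c) - R)]
    ring
  · rw [he] at h
    rw [φf_zero_of_one_le (by nlinarith : 1 ≤ -z + (s - c) - R),
      φf'_zero_of_one_le (by nlinarith : 1 ≤ -z + (s - c) - R)]
    ring

theorem ψwz_zero_far {R c z s : ℝ} (h : R + 1 + |s - c| ≤ |z|) : ψwz R c z s = 0 := by
  unfold ψwz
  have habs := neg_abs_le (s - c)
  rcases abs_cases z with ⟨he, _⟩ | ⟨he, _⟩
  · rw [he] at h
    rw [φf_zero_of_one_le (by nlinarith : 1 ≤ z + (s - c) - R),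
      φf'_zero_of_one_le (by nlinarith : 1 ≤ z + (s - c) - R)]
    ring
  · rw [he] at h
    rw [φf_zero_of_one_le (by nlinarith : 1 ≤ -z + (s - c) - R),
      φf'_zero_of_one_le (by nlinarith : 1 ≤ -z + (s - c) - R)]
    ring

theorem cont_slice1 {f : ℝ → ℝ → ℝ} (h : Continuous fun p : ℝ × ℝ => f p.1 p.2) (s : ℝ) :
    Continuous fun z => f z s := h.comp (continuous_id.prodMk continuous_const)

theorem cont_slice2 {f : ℝ → ℝ → ℝ} (h : Continuous fun p : ℝ × ℝ => f p.1 p.2) (z : ℝ) :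
    Continuous fun s => f z s := h.comp (continuous_const.prodMk continuous_id)

theorem contDiff_slice1 {f : ℝ → ℝ → ℝ} (h : ContDiff ℝ 1 fun p : ℝ × ℝ => f p.1 p.2) (s : ℝ) :
    ContDiff ℝ 1 fun z => f z s := h.comp (contDiff_id.prodMk contDiff_const)

theorem φf_contDiff : ContDiff ℝ 1 φf := by
  rw [contDiff_one_iff_deriv]
  refine ⟨fun x => (hasDerivAt_φf x).differentiableAt, ?_⟩
  have : deriv φf = φf' := funext fun x => (hasDerivAt_φf x).deriv
  rw [this]; exact φf'_cont

theorem ψw_contDiff_z (R c s : ℝ) : ContDiff ℝ 1 fun y => ψw R c y s := by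
  unfold ψw
  have h1 : ContDiff ℝ 1 fun y : ℝ => y + (s - c) - R := by
    have : (fun y : ℝ => y + (s - c) - R) = fun y => y + ((s - c) - R) := by funext y; ring
    rw [this]; exact contDiff_id.add contDiff_const
  have h2 : ContDiff ℝ 1 fun y : ℝ => -y + (s - c) - R := by
    have : (fun y : ℝ => -y + (s - c) - R) = fun y => -y + ((s - c) - R) := by funext y; ring
    rw [this]; exact contDiff_id.neg.add contDiff_const
  exact (φf_contDiff.comp h1).mul (φf_contDiff.comp h2)

theorem mem_far {M x : ℝ} (hx : x ∉ Icc (-M) M) : M ≤ |x| := by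
  simp only [Set.mem_Icc, not_and_or, not_le] at hx
  rcases hx with h | h
  · rcases abs_cases x with ⟨he, _⟩ | ⟨he, _⟩ <;> linarith
  · rcases abs_cases x with ⟨he, _⟩ | ⟨he, _⟩ <;> linarith

theorem integrable_of_supported {f : ℝ → ℝ} (hf : Continuous f) {M : ℝ}
    (h0 : ∀ z, M ≤ |z| → f z = 0) : Integrable f := by
  exact hf.integrable_of_hasCompactSupport
    (HasCompactSupport.intro (isCompact_Icc (a := -M) (b := M)) fun x hx => h0 x (mem_far hx))

theorem hascompactsupport_of_supported {f : ℝ → ℝ} {M : ℝ}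
    (h0 : ∀ z, M ≤ |z| → f z = 0) : HasCompactSupport f :=
  HasCompactSupport.intro (isCompact_Icc (a := -M) (b := M)) fun x hx => h0 x (mem_far hx)

theorem integral_deriv_zero_of_supported {f : ℝ → ℝ} (hf : ContDiff ℝ 1 f) {M : ℝ}
    (h0 : ∀ z, M ≤ |z| → f z = 0) : ∫ z, deriv f z = 0 := by
  have hcs : HasCompactSupport f := hascompactsupport_of_supported h0
  have h1 := hcs.integral_Iic_deriv_eq hf 0
  have h2 := hcs.integral_Ioi_deriv_eq hf 0
  have hint : Integrable (deriv f) :=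
    (hf.continuous_deriv le_rfl).integrable_of_hasCompactSupport hcs.deriv
  have := MeasureTheory.integral_add_compl (measurableSet_Iic (a := (0:ℝ))) hint
  rw [compl_Iic] at this
  rw [← this, h1, h2]
  ring

/-- continuity of a parametric integral with uniformly compactly supported
jointly continuous integrand -/
theorem cont_param_integral {h : ℝ → ℝ → ℝ} (hc : Continuous fun p : ℝ × ℝ => h p.1 p.2)
    {M : ℝ} (hsupp : ∀ z s, M ≤ |z| → h z s = 0) :
    Continuous fun s => ∫ z, h z s := by
  rw [continuous_iff_continuousAt]
  intro s₀
  obtain ⟨C, hC⟩ := (isCompact_Icc.prod (isCompact_Icc (a := s₀ - 1) (b := s₀ + 1))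
    ).exists_bound_of_continuousOn (hc.continuousOn)
  set C' := max C 0 with hC'
  apply MeasureTheory.tendsto_integral_filter_of_dominated_convergence
    (Set.indicator (Icc (-M) M) fun _ => C')
  · exact Filter.Eventually.of_forall fun s => (cont_slice1 hc s).aestronglyMeasurable
  · filter_upwards [Metric.ball_mem_nhds s₀ one_pos] with s hs
    apply Filter.Eventually.of_forall
    intro z
    by_cases hz : z ∈ Icc (-M) M
    · rw [Set.indicator_of_mem hz]
      have hs' : s ∈ Icc (s₀ - 1) (s₀ + 1) := by
        have := Metric.mem_ball.1 hs
        rw [Real.dist_eq, abs_lt] at this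
        constructor <;> linarith [this.1, this.2]
      exact le_trans (hC (z, s) (Set.mk_mem_prod hz hs')) (le_max_left _ _)
    · rw [Set.indicator_of_notMem hz]
      rw [hsupp z s (mem_far hz)]
      simp
  · rw [MeasureTheory.integrable_indicator_iff measurableSet_Icc]
    exact integrableOn_const (by rw [Real.volume_Icc]; exact ENNReal.ofReal_ne_top)
  · exact Filter.Eventually.of_forall fun z => (cont_slice2 hc z).continuousAt
attribute [irreducible] φf φf' ζf Cζ ψ0 ψw ψws ψwz pdz pdt

/-! ### abstract density–flux systems -/

set_option maxHeartbeats 1000000 in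
structure DensityFlux (d flux src : ℝ → ℝ → ℝ) (K : ℝ) : Prop where
  d_cont : Continuous fun p : ℝ × ℝ => d p.1 p.2
  d_nonneg : ∀ z s, 0 ≤ d z s
  d_int : ∀ s, Integrable fun z => d z s
  flux_cd : ContDiff ℝ 1 fun p : ℝ × ℝ => flux p.1 p.2
  flux_le : ∀ z s, |flux z s| ≤ d z s
  src_cont : Continuous fun p : ℝ × ℝ => src p.1 p.2
  src_le : ∀ z s, |src z s| ≤ K * d z s
  K_nonneg : 0 ≤ K
  d_deriv : ∀ z s, HasDerivAt (fun u => d z u) (pdz flux z s + src z s) s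

namespace DensityFlux

variable {d flux src : ℝ → ℝ → ℝ} {K : ℝ}

theorem src_int (H : DensityFlux d flux src K) (s : ℝ) : Integrable fun z => src z s := by
  refine Integrable.mono' ((H.d_int s).const_mul K)
    (cont_slice1 H.src_cont s).aestronglyMeasurable ?_
  exact Filter.Eventually.of_forall fun z => by
    rw [Real.norm_eq_abs]; exact H.src_le z s

theorem A_integrable (H : DensityFlux d flux src K) (R c s : ℝ) :
    Integrable fun z => ψws R c z s * d z s - ψwz R c z s * flux z s := by
  apply integrable_of_supported (M := R + 1 + |s - c|)
  · exact ((cont_slice1 (ψws_cont R c) s).mul (cont_slice1 H.d_cont s)).sub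
      ((cont_slice1 (ψwz_cont R c) s).mul (cont_slice1 (H.flux_cd.continuous) s))
  · intro z hz
    rw [ψws_zero_far hz, ψwz_zero_far hz]; ring

theorem Γ_integrable (H : DensityFlux d flux src K) (R c s : ℝ) :
    Integrable fun z => ψw R c z s * src z s := by
  apply integrable_of_supported (M := R + 1 + |s - c|)
  · exact (cont_slice1 (ψw_cont R c) s).mul (cont_slice1 H.src_cont s)
  · intro z hz
    rw [ψw_zero_far hz, zero_mul]

theorem Fw_integrable (H : DensityFlux d flux src K) (R c s : ℝ) :
    Integrable fun z => ψw R c z s * d z s := by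
  apply integrable_of_supported (M := R + 1 + |s - c|)
  · exact (cont_slice1 (ψw_cont R c) s).mul (cont_slice1 H.d_cont s)
  · intro z hz
    rw [ψw_zero_far hz, zero_mul]

theorem deriv_fluxprod (H : DensityFlux d flux src K) (R c s z : ℝ) :
    HasDerivAt (fun y => ψw R c y s * flux y s)
      (ψwz R c z s * flux z s + ψw R c z s * pdz flux z s) z :=
  (hasDerivAt_ψw_z R c z s).mul (hasDerivAt_pdz H.flux_cd z s)

theorem integral_deriv_fluxprod_zero (H : DensityFlux d flux src K) (R c s : ℝ) :
    ∫ z, (ψwz R c z s * flux z s + ψw R c z s * pdz flux z s) = 0 := by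
  have hcd : ContDiff ℝ 1 fun y => ψw R c y s * flux y s :=
    (ψw_contDiff_z R c s).mul (contDiff_slice1 H.flux_cd s)
  have hder : (fun y => ψwz R c y s * flux y s + ψw R c y s * pdz flux y s)
      = deriv fun y => ψw R c y s * flux y s := by
    funext y
    exact (H.deriv_fluxprod R c s y).deriv.symm
  rw [hder]
  apply integral_deriv_zero_of_supported hcd (M := R + 1 + |s - c|)
  intro z hz
  rw [ψw_zero_far hz, zero_mul]

set_option maxHeartbeats 2000000 in
/-- differentiability of the localized energy, with derivative `A + Γ`. -/
theorem hasDerivAt_Fw (H : DensityFlux d flux src K) (R c s₀ : ℝ) :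
    HasDerivAt (fun s => ∫ z, ψw R c z s * d z s)
      ((∫ z, (ψws R c z s₀ * d z s₀ - ψwz R c z s₀ * flux z s₀))
        + ∫ z, ψw R c z s₀ * src z s₀) s₀ := by
  set F' : ℝ → ℝ → ℝ := fun s z =>
    ψws R c z s * d z s + ψw R c z s * (pdz flux z s + src z s) with hF'
  have hF'cont : Continuous fun p : ℝ × ℝ => F' p.2 p.1 :=
    ((ψws_cont R c).mul H.d_cont).add
      ((ψw_cont R c).mul ((continuous_pdz H.flux_cd).add H.src_cont))
  set M₀ : ℝ := R + 2 + |s₀ - c| with hM₀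
  obtain ⟨C, hC⟩ := ((isCompact_Icc (a := -M₀) (b := M₀)).prod
    (isCompact_Icc (a := s₀ - 1) (b := s₀ + 1))).exists_bound_of_continuousOn
    (hF'cont.continuousOn)
  set C' := max C 0 with hC'def
  have hfar : ∀ z s, s ∈ Metric.ball s₀ 1 → M₀ ≤ |z| → F' s z = 0 := by
    intro z s hs hz
    have hsc : |s - c| ≤ |s₀ - c| + 1 := by
      have h1 : |s - s₀| < 1 := by
        have := Metric.mem_ball.1 hs; rwa [Real.dist_eq] at this
      calc |s - c| = |(s - s₀) + (s₀ - c)| := by ring_nf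
      _ ≤ |s - s₀| + |s₀ - c| := abs_add_le _ _
      _ ≤ |s₀ - c| + 1 := by linarith
    have hz' : R + 1 + |s - c| ≤ |z| := by
      calc R + 1 + |s - c| ≤ R + 1 + (|s₀ - c| + 1) := by linarith
      _ = M₀ := by rw [hM₀]; ring
      _ ≤ |z| := hz
    simp only [hF', ψws_zero_far hz', ψw_zero_far hz', zero_mul]
    ring
  have key := hasDerivAt_integral_of_dominated_loc_of_deriv_le
    (μ := (volume : Measure ℝ)) (x₀ := s₀)
    (F := fun s z => ψw R c z s * d z s) (F' := F')
    (bound := Set.indicator (Icc (-M₀) M₀) fun _ => C') (Metric.ball_mem_nhds s₀ one_pos)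
    (Filter.Eventually.of_forall fun s =>
      ((cont_slice1 (ψw_cont R c) s).mul (cont_slice1 H.d_cont s)).aestronglyMeasurable)
    (H.Fw_integrable R c s₀)
    (by
      have hcc : Continuous fun z => F' s₀ z :=
        hF'cont.comp (continuous_id.prodMk continuous_const)
      exact hcc.aestronglyMeasurable)
    (Filter.Eventually.of_forall fun z => by
      intro s hs
      by_cases hz : z ∈ Icc (-M₀) M₀
      · rw [Set.indicator_of_mem hz]
        have hs' : s ∈ Icc (s₀ - 1) (s₀ + 1) := by
          have := Metric.mem_ball.1 hs
          rw [Real.dist_eq, abs_lt] at this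
          constructor <;> linarith [this.1, this.2]
        exact le_trans (hC (z, s) (Set.mk_mem_prod hz hs')) (le_max_left _ _)
      · rw [Set.indicator_of_notMem hz, hfar z s hs (mem_far hz)]
        simp)
    (by
      rw [MeasureTheory.integrable_indicator_iff measurableSet_Icc]
      exact integrableOn_const (by rw [Real.volume_Icc]; exact ENNReal.ofReal_ne_top))
    (Filter.Eventually.of_forall fun z => fun s _ =>
      (hasDerivAt_ψw_s R c z s).mul (H.d_deriv z s))
  have hres := key.2
  have hsplit : (∫ z, F' s₀ z)
      = (∫ z, (ψws R c z s₀ * d z s₀ - ψwz R c z s₀ * flux z s₀))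
        + ∫ z, ψw R c z s₀ * src z s₀ := by
    have heq : (fun z => F' s₀ z) = fun z =>
        (ψws R c z s₀ * d z s₀ - ψwz R c z s₀ * flux z s₀)
        + ((ψw R c z s₀ * src z s₀)
          + (ψwz R c z s₀ * flux z s₀ + ψw R c z s₀ * pdz flux z s₀)) := by
      funext z; simp only [hF']; ring
    have hint3 : Integrable fun z =>
        ψwz R c z s₀ * flux z s₀ + ψw R c z s₀ * pdz flux z s₀ := by
      apply integrable_of_supported (M := R + 1 + |s₀ - c|)
      · exact ((cont_slice1 (ψwz_cont R c) s₀).mul (cont_slice1 H.flux_cd.continuous s₀)).add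
          ((cont_slice1 (ψw_cont R c) s₀).mul (cont_slice1 (continuous_pdz H.flux_cd) s₀))
      · intro z hz
        rw [ψw_zero_far hz, ψwz_zero_far hz]; ring
    rw [heq]
    have i23 : Integrable (fun z => ψw R c z s₀ * src z s₀
        + (ψwz R c z s₀ * flux z s₀ + ψw R c z s₀ * pdz flux z s₀)) volume :=
      (H.Γ_integrable R c s₀).add hint3
    rw [MeasureTheory.integral_add (H.A_integrable R c s₀) i23]
    rw [MeasureTheory.integral_add (H.Γ_integrable R c s₀) hint3]
    rw [H.integral_deriv_fluxprod_zero R c s₀, add_zero]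
  rwa [hsplit] at hres

end DensityFlux

namespace DensityFlux

variable {d flux src : ℝ → ℝ → ℝ} {K : ℝ}

theorem A_nonpos (H : DensityFlux d flux src K) (R c s : ℝ) :
    (∫ z, (ψws R c z s * d z s - ψwz R c z s * flux z s)) ≤ 0 := by
  apply MeasureTheory.integral_nonpos
  intro z
  have h1 : |ψwz R c z s * flux z s| ≤ (-ψws R c z s) * d z s := by
    rw [abs_mul]
    exact mul_le_mul (ψwz_abs_le R c z s) (H.flux_le z s) (abs_nonneg _)
      (by linarith [ψws_nonpos R c z s])
  have h2 := neg_abs_le (ψwz R c z s * flux z s)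
  simp only [Pi.zero_apply]
  nlinarith

theorem Fw_nonneg (H : DensityFlux d flux src K) (R c s : ℝ) :
    0 ≤ ∫ z, ψw R c z s * d z s :=
  MeasureTheory.integral_nonneg fun z => mul_nonneg (ψw_nonneg R c z s) (H.d_nonneg z s)

theorem Γ_le (H : DensityFlux d flux src K) (R c s : ℝ) :
    (∫ z, ψw R c z s * src z s) ≤ K * ∫ z, ψw R c z s * d z s := by
  have h : (∫ z, ψw R c z s * src z s) ≤ ∫ z, K * (ψw R c z s * d z s) := by
    apply MeasureTheory.integral_mono (H.Γ_integrable R c s)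
      ((H.Fw_integrable R c s).const_mul K)
    intro z
    dsimp only
    have h1 : src z s ≤ K * d z s := le_trans (le_abs_self _) (H.src_le z s)
    have h2 := ψw_nonneg R c z s
    nlinarith
  rwa [MeasureTheory.integral_const_mul] at h

theorem cone (H : DensityFlux d flux src K) (R c : ℝ) {a b : ℝ} (hab : a ≤ b) :
    (∫ z, ψw R c z b * d z b) ≤ Real.exp (K * (b - a)) * ∫ z, ψw R c z a * d z a := by
  set F : ℝ → ℝ := fun s => ∫ z, ψw R c z s * d z s with hF
  have hHder : ∀ s, HasDerivAt (fun u => F u * Real.exp (-(K * u)))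
      (((∫ z, (ψws R c z s * d z s - ψwz R c z s * flux z s))
        + ∫ z, ψw R c z s * src z s) * Real.exp (-(K * s))
        + F s * (Real.exp (-(K * s)) * -K)) s := by
    intro s
    have h1 := H.hasDerivAt_Fw R c s
    have h2 : HasDerivAt (fun u : ℝ => Real.exp (-(K * u))) (Real.exp (-(K * s)) * -K) s := by
      have hin : HasDerivAt (fun u : ℝ => -(K * u)) (-K) s := by
        simpa [Pi.neg_def] using ((hasDerivAt_id s).const_mul K).neg
      simpa [Function.comp_def] using (Real.hasDerivAt_exp (-(K * s))).comp s hin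
    exact h1.mul h2
  have hmono : Antitone fun s => F s * Real.exp (-(K * s)) := by
    apply antitone_of_deriv_nonpos
    · exact fun s => (hHder s).differentiableAt
    · intro s
      rw [(hHder s).deriv]
      have hA := H.A_nonpos R c s
      have hΓ : (∫ z, ψw R c z s * src z s) ≤ K * F s := H.Γ_le R c s
      have hFn : 0 ≤ F s := H.Fw_nonneg R c s
      have hexp := Real.exp_pos (-(K * s))
      nlinarith
  have := hmono hab
  have hFb : F b = (F b * Real.exp (-(K * b))) * Real.exp (K * b) := by
    rw [mul_assoc, ← Real.exp_add]; simp
  calc F b = (F b * Real.exp (-(K * b))) * Real.exp (K * b) := hFb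
  _ ≤ (F a * Real.exp (-(K * a))) * Real.exp (K * b) :=
      mul_le_mul_of_nonneg_right this (Real.exp_pos _).le
  _ = Real.exp (K * (b - a)) * F a := by
      rw [mul_assoc, ← Real.exp_add, mul_comm]
      congr 2
      ring

theorem Fw_tendsto (H : DensityFlux d flux src K) (c s : ℝ) :
    Filter.Tendsto (fun R => ∫ z, ψw R c z s * d z s) Filter.atTop (nhds (∫ z, d z s)) := by
  apply MeasureTheory.tendsto_integral_filter_of_dominated_convergence (fun z => d z s)
  · exact Filter.Eventually.of_forall fun R =>
      ((cont_slice1 (ψw_cont R c) s).mul (cont_slice1 H.d_cont s)).aestronglyMeasurable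
  · apply Filter.Eventually.of_forall
    intro R
    apply Filter.Eventually.of_forall
    intro z
    rw [Real.norm_eq_abs, abs_mul, abs_of_nonneg (ψw_nonneg R c z s),
      abs_of_nonneg (H.d_nonneg z s)]
    nlinarith [ψw_le_one R c z s, ψw_nonneg R c z s, H.d_nonneg z s]
  · exact H.d_int s
  · apply Filter.Eventually.of_forall
    intro z
    simpa using (ψw_tendsto c z s).mul_const (d z s)

theorem F0_tendsto (H : DensityFlux d flux src K) (s : ℝ) :
    Filter.Tendsto (fun R => ∫ z, ψ0 R z * d z s) Filter.atTop (nhds (∫ z, d z s)) := by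
  apply MeasureTheory.tendsto_integral_filter_of_dominated_convergence (fun z => d z s)
  · exact Filter.Eventually.of_forall fun R =>
      ((ψ0_cont R).mul (cont_slice1 H.d_cont s)).aestronglyMeasurable
  · apply Filter.Eventually.of_forall
    intro R
    apply Filter.Eventually.of_forall
    intro z
    rw [Real.norm_eq_abs, abs_mul, abs_of_nonneg (ψ0_nonneg R z),
      abs_of_nonneg (H.d_nonneg z s)]
    nlinarith [ψ0_le_one R z, ψ0_nonneg R z, H.d_nonneg z s]
  · exact H.d_int s
  · apply Filter.Eventually.of_forall
    intro z
    simpa using (ψ0_tendsto z).mul_const (d z s)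

theorem F0_le (H : DensityFlux d flux src K) (R s : ℝ) :
    (∫ z, ψ0 R z * d z s) ≤ ∫ z, d z s := by
  apply MeasureTheory.integral_mono (by
    apply integrable_of_supported (M := R + 1)
    · exact (ψ0_cont R).mul (cont_slice1 H.d_cont s)
    · intro z hz; rw [ψ0_zero_far hz, zero_mul]) (H.d_int s)
  intro z
  dsimp only
  nlinarith [ψ0_le_one R z, ψ0_nonneg R z, H.d_nonneg z s]

theorem F0_nonneg (H : DensityFlux d flux src K) (R s : ℝ) :
    0 ≤ ∫ z, ψ0 R z * d z s :=
  MeasureTheory.integral_nonneg fun z => mul_nonneg (ψ0_nonneg R z) (H.d_nonneg z s)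

theorem cone0 (H : DensityFlux d flux src K) {a b : ℝ} (hab : a ≤ b) (R : ℝ) :
    (∫ z, ψ0 (R - (b - a)) z * d z b) ≤ Real.exp (K * (b - a)) * ∫ z, ψ0 R z * d z a := by
  have h := H.cone R a hab
  have e1 : (∫ z, ψw R a z b * d z b) = ∫ z, ψ0 (R - (b - a)) z * d z b := by
    congr 1; funext z; rw [ψw_at]
  have e2 : (∫ z, ψw R a z a * d z a) = ∫ z, ψ0 R z * d z a := by
    congr 1; funext z; rw [ψw_at_anchor]
  rwa [e1, e2] at h

theorem global_forward (H : DensityFlux d flux src K) {a b : ℝ} (hab : a ≤ b) :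
    (∫ z, d z b) ≤ Real.exp (K * (b - a)) * ∫ z, d z a := by
  apply le_of_tendsto (H.Fw_tendsto a b)
  apply Filter.Eventually.of_forall
  intro R
  calc (∫ z, ψw R a z b * d z b) ≤ Real.exp (K * (b - a)) * ∫ z, ψw R a z a * d z a :=
      H.cone R a hab
  _ ≤ Real.exp (K * (b - a)) * ∫ z, d z a := by
      apply mul_le_mul_of_nonneg_left _ (Real.exp_pos _).le
      have e2 : (∫ z, ψw R a z a * d z a) = ∫ z, ψ0 R z * d z a := by
        congr 1; funext z; rw [ψw_at_anchor]
      rw [e2]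
      exact H.F0_le R a

theorem reflect (H : DensityFlux d flux src K) (c : ℝ) :
    DensityFlux (fun z s => d z (c - s)) (fun z s => -flux z (c - s))
      (fun z s => -src z (c - s)) K := by
  have hrefl : Continuous fun p : ℝ × ℝ => (p.1, c - p.2) :=
    continuous_fst.prodMk (continuous_const.sub continuous_snd)
  have hreflcd : ContDiff ℝ 1 fun p : ℝ × ℝ => (p.1, c - p.2) :=
    contDiff_fst.prodMk (contDiff_const.sub contDiff_snd)
  have hpdzeq : ∀ z s, pdz (fun z s => -flux z (c - s)) z s = -(pdz flux z (c - s)) := by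
    intro z s
    have h1 : HasDerivAt (fun y => -flux y (c - s)) (-(pdz flux z (c - s))) z :=
      (hasDerivAt_pdz H.flux_cd z (c - s)).neg
    have h2 : HasDerivAt (fun y => -flux y (c - s)) (pdz (fun z s => -flux z (c - s)) z s) z :=
      hasDerivAt_pdz (f := fun z s => -flux z (c - s)) ((H.flux_cd.comp hreflcd).neg) z s
    exact h2.unique h1
  refine ⟨H.d_cont.comp hrefl, fun z s => H.d_nonneg z _, fun s => H.d_int _,
    (H.flux_cd.comp hreflcd).neg,
    fun z s => by simpa [abs_neg] using H.flux_le z (c - s),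
    (H.src_cont.comp hrefl).neg,
    fun z s => by simpa [abs_neg] using H.src_le z (c - s),
    H.K_nonneg, ?_⟩
  intro z s
  have h0 : HasDerivAt (fun u : ℝ => c - u) (-1) s := by
    simpa using (hasDerivAt_id s).const_sub c
  have h1 := (H.d_deriv z (c - s)).comp s h0
  rw [hpdzeq]
  refine h1.congr_deriv ?_
  ring

theorem global_backward (H : DensityFlux d flux src K) {a b : ℝ} (hab : a ≤ b) :
    (∫ z, d z a) ≤ Real.exp (K * (b - a)) * ∫ z, d z b := by
  have h := (H.reflect (a + b)).global_forward hab
  simpa [add_sub_cancel_left, add_sub_cancel_right] using h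

theorem cone0_backward (H : DensityFlux d flux src K) {a b : ℝ} (hab : a ≤ b) (R : ℝ) :
    (∫ z, ψ0 (R - (b - a)) z * d z a) ≤ Real.exp (K * (b - a)) * ∫ z, ψ0 R z * d z b := by
  have h := (H.reflect (a + b)).cone0 hab R
  simpa [add_sub_cancel_left, add_sub_cancel_right] using h

end DensityFlux

/-- parametric continuity, support growing linearly in the parameter -/
theorem cont_param_integral' {h : ℝ → ℝ → ℝ} (hc : Continuous fun p : ℝ × ℝ => h p.1 p.2)
    {M : ℝ} (hsupp : ∀ z s, M + |s| ≤ |z| → h z s = 0) :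
    Continuous fun s => ∫ z, h z s := by
  rw [continuous_iff_continuousAt]
  intro s₀
  set M₀ : ℝ := M + |s₀| + 1 with hM₀
  obtain ⟨C, hC⟩ := ((isCompact_Icc (a := -M₀) (b := M₀)).prod
    (isCompact_Icc (a := s₀ - 1) (b := s₀ + 1))).exists_bound_of_continuousOn
    (hc.continuousOn)
  set C' := max C 0 with hC'
  apply MeasureTheory.tendsto_integral_filter_of_dominated_convergence
    (Set.indicator (Icc (-M₀) M₀) fun _ => C')
  · exact Filter.Eventually.of_forall fun s => (cont_slice1 hc s).aestronglyMeasurable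
  · filter_upwards [Metric.ball_mem_nhds s₀ one_pos] with s hs
    apply Filter.Eventually.of_forall
    intro z
    by_cases hz : z ∈ Icc (-M₀) M₀
    · rw [Set.indicator_of_mem hz]
      have hs' : s ∈ Icc (s₀ - 1) (s₀ + 1) := by
        have := Metric.mem_ball.1 hs
        rw [Real.dist_eq, abs_lt] at this
        constructor <;> linarith [this.1, this.2]
      exact le_trans (hC (z, s) (Set.mk_mem_prod hz hs')) (le_max_left _ _)
    · rw [Set.indicator_of_notMem hz]
      have hss : |s| ≤ |s₀| + 1 := by
        have := Metric.mem_ball.1 hs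
        rw [Real.dist_eq, abs_lt] at this
        rcases abs_cases s with ⟨he, _⟩ | ⟨he, _⟩ <;> rcases abs_cases s₀ with ⟨he2, _⟩ | ⟨he2, _⟩ <;>
          linarith [this.1, this.2]
      have h2 := mem_far hz
      rw [hM₀] at h2
      rw [hsupp z s (by linarith)]
      simp
  · rw [MeasureTheory.integrable_indicator_iff measurableSet_Icc]
    exact integrableOn_const (by rw [Real.volume_Icc]; exact ENNReal.ofReal_ne_top)
  · exact Filter.Eventually.of_forall fun z => (cont_slice2 hc z).continuousAt

namespace DensityFlux

variable {d flux src : ℝ → ℝ → ℝ} {K : ℝ}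

theorem dInt_nonneg (H : DensityFlux d flux src K) (s : ℝ) : 0 ≤ ∫ z, d z s :=
  MeasureTheory.integral_nonneg fun z => H.d_nonneg z s

theorem F0_integrable (H : DensityFlux d flux src K) (R s : ℝ) :
    Integrable fun z => ψ0 R z * d z s := by
  apply integrable_of_supported (M := R + 1)
  · exact (ψ0_cont R).mul (cont_slice1 H.d_cont s)
  · intro z hz; rw [ψ0_zero_far hz, zero_mul]

theorem Γ0_integrable (H : DensityFlux d flux src K) (R s : ℝ) :
    Integrable fun z => ψ0 R z * src z s := by
  apply integrable_of_supported (M := R + 1)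
  · exact (ψ0_cont R).mul (cont_slice1 H.src_cont s)
  · intro z hz; rw [ψ0_zero_far hz, zero_mul]

theorem AA_ptwise (H : DensityFlux d flux src K) (R c z s : ℝ) :
    |ψws R c z s * d z s - ψwz R c z s * flux z s| ≤ (4 / Cζ) * d z s := by
  have h1 : |ψws R c z s * d z s| ≤ (2 / Cζ) * d z s := by
    rw [abs_mul, abs_of_nonneg (H.d_nonneg z s)]
    exact mul_le_mul_of_nonneg_right (ψws_abs_le R c z s) (H.d_nonneg z s)
  have h2 : |ψwz R c z s * flux z s| ≤ (2 / Cζ) * d z s := by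
    rw [abs_mul]
    exact mul_le_mul (ψwz_abs_le' R c z s) (H.flux_le z s) (abs_nonneg _)
      (le_of_lt (div_pos two_pos Cζ_pos))
  calc |ψws R c z s * d z s - ψwz R c z s * flux z s|
      ≤ |ψws R c z s * d z s| + |ψwz R c z s * flux z s| := abs_sub _ _
  _ ≤ (2 / Cζ) * d z s + (2 / Cζ) * d z s := add_le_add h1 h2
  _ = (4 / Cζ) * d z s := by ring

theorem AA_abs_le (H : DensityFlux d flux src K) (R c s : ℝ) :
    |∫ z, (ψws R c z s * d z s - ψwz R c z s * flux z s)| ≤ (4 / Cζ) * ∫ z, d z s := by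
  calc |∫ z, (ψws R c z s * d z s - ψwz R c z s * flux z s)|
      ≤ ∫ z, |ψws R c z s * d z s - ψwz R c z s * flux z s| := by
        simpa [Real.norm_eq_abs] using
          MeasureTheory.norm_integral_le_integral_norm
            (fun z => ψws R c z s * d z s - ψwz R c z s * flux z s)
  _ ≤ ∫ z, (4 / Cζ) * d z s := by
      apply MeasureTheory.integral_mono (H.A_integrable R c s).abs
        ((H.d_int s).const_mul _)
      exact fun z => H.AA_ptwise R c z s
  _ = (4 / Cζ) * ∫ z, d z s := MeasureTheory.integral_const_mul _ _

theorem GG_abs_le (H : DensityFlux d flux src K) (R c s : ℝ) :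
    |∫ z, ψw R c z s * src z s| ≤ K * ∫ z, d z s := by
  have habs : |∫ z, ψw R c z s * src z s| ≤ ∫ z, |ψw R c z s * src z s| := by
    have := MeasureTheory.norm_integral_le_integral_norm
      (μ := (volume : Measure ℝ)) (fun z => ψw R c z s * src z s)
    simpa only [Real.norm_eq_abs] using this
  calc |∫ z, ψw R c z s * src z s| ≤ ∫ z, |ψw R c z s * src z s| := habs
  _ ≤ ∫ z, K * d z s := by
      apply MeasureTheory.integral_mono (H.Γ_integrable R c s).abs ((H.d_int s).const_mul _)
      intro z
      dsimp only
      rw [abs_mul, abs_of_nonneg (ψw_nonneg R c z s)]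
      calc ψw R c z s * |src z s| ≤ 1 * (K * d z s) := by
            apply mul_le_mul (ψw_le_one R c z s) (H.src_le z s) (abs_nonneg _) one_pos.le
      _ = K * d z s := one_mul _
  _ = K * ∫ z, d z s := MeasureTheory.integral_const_mul _ _

theorem AA_tendsto (H : DensityFlux d flux src K) (c s : ℝ) :
    Filter.Tendsto (fun R => ∫ z, (ψws R c z s * d z s - ψwz R c z s * flux z s))
      Filter.atTop (nhds 0) := by
  have h := MeasureTheory.tendsto_integral_filter_of_dominated_convergence
    (μ := (volume : Measure ℝ)) (F := fun R z => ψws R c z s * d z s - ψwz R c z s * flux z s)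
    (f := fun _ => (0 : ℝ)) (bound := fun z => (4 / Cζ) * d z s)
    (Filter.Eventually.of_forall fun R =>
      (((cont_slice1 (ψws_cont R c) s).mul (cont_slice1 H.d_cont s)).sub
        ((cont_slice1 (ψwz_cont R c) s).mul
          (cont_slice1 H.flux_cd.continuous s))).aestronglyMeasurable)
    (Filter.Eventually.of_forall fun R => Filter.Eventually.of_forall fun z => by
      rw [Real.norm_eq_abs]; exact H.AA_ptwise R c z s)
    ((H.d_int s).const_mul _)
    (Filter.Eventually.of_forall fun z => by
      have := ((ψws_tendsto c z s).mul_const (d z s)).sub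
        ((ψwz_tendsto c z s).mul_const (flux z s))
      simpa using this)
  simpa using h

theorem GG_tendsto (H : DensityFlux d flux src K) (c s : ℝ) :
    Filter.Tendsto (fun R => ∫ z, ψw R c z s * src z s)
      Filter.atTop (nhds (∫ z, src z s)) := by
  apply MeasureTheory.tendsto_integral_filter_of_dominated_convergence
    (fun z => K * d z s)
  · exact Filter.Eventually.of_forall fun R =>
      ((cont_slice1 (ψw_cont R c) s).mul (cont_slice1 H.src_cont s)).aestronglyMeasurable
  · apply Filter.Eventually.of_forall
    intro R
    apply Filter.Eventually.of_forall
    intro z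
    rw [Real.norm_eq_abs, abs_mul, abs_of_nonneg (ψw_nonneg R c z s)]
    calc ψw R c z s * |src z s| ≤ 1 * (K * d z s) :=
      mul_le_mul (ψw_le_one R c z s) (H.src_le z s) (abs_nonneg _) one_pos.le
    _ = K * d z s := one_mul _
  · exact (H.d_int s).const_mul _
  · exact Filter.Eventually.of_forall fun z => by
      simpa using (ψw_tendsto c z s).mul_const (src z s)

theorem AA_cont (H : DensityFlux d flux src K) (R c : ℝ) :
    Continuous fun s => ∫ z, (ψws R c z s * d z s - ψwz R c z s * flux z s) := by
  apply cont_param_integral' (M := R + 1 + |c|)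
  · exact ((ψws_cont R c).mul H.d_cont).sub ((ψwz_cont R c).mul H.flux_cd.continuous)
  · intro z s hz
    have hfar : R + 1 + |s - c| ≤ |z| := by
      have h1 : |s - c| ≤ |s| + |c| := abs_sub _ _
      linarith
    rw [ψws_zero_far hfar, ψwz_zero_far hfar]; ring

theorem GG_cont (H : DensityFlux d flux src K) (R c : ℝ) :
    Continuous fun s => ∫ z, ψw R c z s * src z s := by
  apply cont_param_integral' (M := R + 1 + |c|)
  · exact (ψw_cont R c).mul H.src_cont
  · intro z s hz
    have hfar : R + 1 + |s - c| ≤ |z| := by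
      have h1 : |s - c| ≤ |s| + |c| := abs_sub _ _
      linarith
    rw [ψw_zero_far hfar, zero_mul]

theorem Γ0_cont (H : DensityFlux d flux src K) (R : ℝ) :
    Continuous fun s => ∫ z, ψ0 R z * src z s := by
  apply cont_param_integral' (M := R + 1)
  · exact ((ψ0_cont R).comp continuous_fst).mul H.src_cont
  · intro z s hz
    rw [ψ0_zero_far (by linarith [abs_nonneg s] : R + 1 ≤ |z|), zero_mul]

/-- the fundamental identity: the total mass changes only by the integrated source. -/
theorem identity (H : DensityFlux d flux src K) {a b : ℝ} (hab : a ≤ b) :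
    (∫ z, d z b) - (∫ z, d z a) = ∫ s in a..b, (∫ z, src z s) := by
  have hFTC : ∀ R : ℝ, (∫ z, ψw R a z b * d z b) - (∫ z, ψw R a z a * d z a)
      = ∫ s in a..b, ((∫ z, (ψws R a z s * d z s - ψwz R a z s * flux z s))
          + ∫ z, ψw R a z s * src z s) := by
    intro R
    rw [intervalIntegral.integral_eq_sub_of_hasDerivAt
      (fun s _ => H.hasDerivAt_Fw R a s)
      (((H.AA_cont R a).add (H.GG_cont R a)).intervalIntegrable a b)]
  have hL : Filter.Tendsto
      (fun R => (∫ z, ψw R a z b * d z b) - ∫ z, ψw R a z a * d z a)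
      Filter.atTop (nhds ((∫ z, d z b) - ∫ z, d z a)) :=
    (H.Fw_tendsto a b).sub (H.Fw_tendsto a a)
  have hR : Filter.Tendsto
      (fun R => ∫ s in a..b, ((∫ z, (ψws R a z s * d z s - ψwz R a z s * flux z s))
          + ∫ z, ψw R a z s * src z s))
      Filter.atTop (nhds (∫ s in a..b, ((0 : ℝ) + ∫ z, src z s))) := by
    apply intervalIntegral.tendsto_integral_filter_of_dominated_convergence
      (bound := fun _ => (4 / Cζ + K) * (Real.exp (K * (b - a)) * ∫ z, d z a))
    · exact Filter.Eventually.of_forall fun R =>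
        ((H.AA_cont R a).add (H.GG_cont R a)).aestronglyMeasurable.restrict
    · apply Filter.Eventually.of_forall
      intro R
      apply Filter.Eventually.of_forall
      intro s hs
      rw [Set.uIoc_of_le hab] at hs
      have hsa : a ≤ s := hs.1.le
      have hsb : s ≤ b := hs.2
      have h1 := H.AA_abs_le R a s
      have h2 := H.GG_abs_le R a s
      have h3 : (∫ z, d z s) ≤ Real.exp (K * (b - a)) * ∫ z, d z a := by
        calc (∫ z, d z s) ≤ Real.exp (K * (s - a)) * ∫ z, d z a := H.global_forward hsa
        _ ≤ Real.exp (K * (b - a)) * ∫ z, d z a := by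
            apply mul_le_mul_of_nonneg_right _ (H.dInt_nonneg a)
            exact Real.exp_le_exp.2 (by nlinarith [H.K_nonneg])
      have h4 : (0:ℝ) ≤ 4 / Cζ := le_of_lt (div_pos four_pos Cζ_pos)
      have h5 := H.dInt_nonneg s
      rw [Real.norm_eq_abs]
      calc |(∫ z, (ψws R a z s * d z s - ψwz R a z s * flux z s))
          + ∫ z, ψw R a z s * src z s| ≤ _ := abs_add_le _ _
      _ ≤ (4 / Cζ) * (∫ z, d z s) + K * ∫ z, d z s := add_le_add h1 h2
      _ = (4 / Cζ + K) * ∫ z, d z s := by ring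
      _ ≤ (4 / Cζ + K) * (Real.exp (K * (b - a)) * ∫ z, d z a) := by
          apply mul_le_mul_of_nonneg_left h3
          linarith [H.K_nonneg]
    · exact intervalIntegrable_const
    · exact Filter.Eventually.of_forall fun s _ =>
        (H.AA_tendsto a s).add (H.GG_tendsto a s)
  have hR' : Filter.Tendsto
      (fun R => (∫ z, ψw R a z b * d z b) - ∫ z, ψw R a z a * d z a)
      Filter.atTop (nhds (∫ s in a..b, ((0 : ℝ) + ∫ z, src z s))) :=
    Filter.Tendsto.congr (fun R => (hFTC R).symm) hR
  have := tendsto_nhds_unique hL hR'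
  rw [this]
  congr 1
  funext s
  rw [zero_add]

end DensityFlux

namespace DensityFlux

variable {d flux src : ℝ → ℝ → ℝ} {K : ℝ}

theorem F0_mono (H : DensityFlux d flux src K) {R R' : ℝ} (h : R ≤ R') (s : ℝ) :
    (∫ z, ψ0 R z * d z s) ≤ ∫ z, ψ0 R' z * d z s := by
  apply MeasureTheory.integral_mono (H.F0_integrable R s) (H.F0_integrable R' s)
  intro z
  exact mul_le_mul_of_nonneg_right (ψ0_mono h z) (H.d_nonneg z s)

theorem tail_bound (H : DensityFlux d flux src K) {t s δ : ℝ} (R : ℝ)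
    (hδ0 : 0 ≤ δ) (hst : |s - t| ≤ δ) :
    (∫ z, d z s) - (∫ z, ψ0 R z * d z s)
      ≤ (Real.exp (K * δ) - Real.exp (-(K * δ))) * (∫ z, d z t)
        + ((∫ z, d z t) - ∫ z, ψ0 (R - δ) z * d z t) := by
  have hK := H.K_nonneg
  have hdt := H.dInt_nonneg t
  have hds := H.dInt_nonneg s
  have hX0 : 0 ≤ ∫ z, ψ0 (R - δ) z * d z t := H.F0_nonneg _ t
  have hXle : (∫ z, ψ0 (R - δ) z * d z t) ≤ ∫ z, d z t := H.F0_le _ t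
  have hF0s : 0 ≤ ∫ z, ψ0 R z * d z s := H.F0_nonneg R s
  -- (1) mass bound
  have h1 : (∫ z, d z s) ≤ Real.exp (K * δ) * ∫ z, d z t := by
    rcases le_total t s with h | h
    · calc (∫ z, d z s) ≤ Real.exp (K * (s - t)) * ∫ z, d z t := H.global_forward h
      _ ≤ Real.exp (K * δ) * ∫ z, d z t := by
          apply mul_le_mul_of_nonneg_right _ hdt
          apply Real.exp_le_exp.2
          have : s - t ≤ δ := by rwa [abs_of_nonneg (by linarith : 0 ≤ s - t)] at hst
          nlinarith
    · calc (∫ z, d z s) ≤ Real.exp (K * (t - s)) * ∫ z, d z t := H.global_backward h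
      _ ≤ Real.exp (K * δ) * ∫ z, d z t := by
          apply mul_le_mul_of_nonneg_right _ hdt
          apply Real.exp_le_exp.2
          have : t - s ≤ δ := by rwa [abs_of_nonpos (by linarith : s - t ≤ 0), neg_sub] at hst
          nlinarith
  -- (2) localized lower bound
  have h2 : (∫ z, ψ0 (R - δ) z * d z t) ≤ Real.exp (K * δ) * ∫ z, ψ0 R z * d z s := by
    rcases le_total t s with h | h
    · have hc := H.cone0_backward h R
      have habs : s - t ≤ δ := by rwa [abs_of_nonneg (by linarith : 0 ≤ s - t)] at hst
      calc (∫ z, ψ0 (R - δ) z * d z t) ≤ ∫ z, ψ0 (R - (s - t)) z * d z t :=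
          H.F0_mono (by linarith) t
      _ ≤ Real.exp (K * (s - t)) * ∫ z, ψ0 R z * d z s := hc
      _ ≤ Real.exp (K * δ) * ∫ z, ψ0 R z * d z s := by
          apply mul_le_mul_of_nonneg_right _ hF0s
          exact Real.exp_le_exp.2 (by nlinarith)
    · have hc := H.cone0 h R
      have habs : t - s ≤ δ := by rwa [abs_of_nonpos (by linarith : s - t ≤ 0), neg_sub] at hst
      calc (∫ z, ψ0 (R - δ) z * d z t) ≤ ∫ z, ψ0 (R - (t - s)) z * d z t :=
          H.F0_mono (by linarith) t
      _ ≤ Real.exp (K * (t - s)) * ∫ z, ψ0 R z * d z s := hc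
      _ ≤ Real.exp (K * δ) * ∫ z, ψ0 R z * d z s := by
          apply mul_le_mul_of_nonneg_right _ hF0s
          exact Real.exp_le_exp.2 (by nlinarith)
  -- combine
  have hee : Real.exp (-(K * δ)) * Real.exp (K * δ) = 1 := by
    rw [← Real.exp_add]; simp
  have hepos : (0:ℝ) < Real.exp (K * δ) := Real.exp_pos _
  have hepos' : (0:ℝ) < Real.exp (-(K * δ)) := Real.exp_pos _
  have he1 : Real.exp (-(K * δ)) ≤ 1 := Real.exp_le_one_iff.2 (by nlinarith)
  -- F0 R s ≥ exp(-(Kδ)) * X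
  have h3 : Real.exp (-(K * δ)) * (∫ z, ψ0 (R - δ) z * d z t) ≤ ∫ z, ψ0 R z * d z s := by
    have := mul_le_mul_of_nonneg_left h2 hepos'.le
    calc Real.exp (-(K * δ)) * (∫ z, ψ0 (R - δ) z * d z t)
        ≤ Real.exp (-(K * δ)) * (Real.exp (K * δ) * ∫ z, ψ0 R z * d z s) := this
    _ = ∫ z, ψ0 R z * d z s := by rw [← mul_assoc, hee, one_mul]
  nlinarith [mul_nonneg (sub_nonneg.2 he1) (sub_nonneg.2 hXle)]

theorem Γ0_abs_diff (H : DensityFlux d flux src K) (R s : ℝ) :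
    |(∫ z, src z s) - ∫ z, ψ0 R z * src z s|
      ≤ K * ((∫ z, d z s) - ∫ z, ψ0 R z * d z s) := by
  have hsub : (∫ z, src z s) - (∫ z, ψ0 R z * src z s)
      = ∫ z, (src z s - ψ0 R z * src z s) :=
    (MeasureTheory.integral_sub (H.src_int s) (H.Γ0_integrable R s)).symm
  rw [hsub]
  have habs : |∫ z, (src z s - ψ0 R z * src z s)|
      ≤ ∫ z, |src z s - ψ0 R z * src z s| := by
    have := MeasureTheory.norm_integral_le_integral_norm
      (μ := (volume : Measure ℝ)) (fun z => src z s - ψ0 R z * src z s)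
    simpa only [Real.norm_eq_abs] using this
  have hmono : (∫ z, |src z s - ψ0 R z * src z s|)
      ≤ ∫ z, K * (d z s - ψ0 R z * d z s) := by
    apply MeasureTheory.integral_mono ((H.src_int s).sub (H.Γ0_integrable R s)).abs
      (((H.d_int s).sub (H.F0_integrable R s)).const_mul K)
    intro z
    simp only [Pi.sub_apply]
    have h1 : src z s - ψ0 R z * src z s = (1 - ψ0 R z) * src z s := by ring
    have h2 : 0 ≤ 1 - ψ0 R z := by linarith [ψ0_le_one R z]
    rw [h1, abs_mul, abs_of_nonneg h2]
    calc (1 - ψ0 R z) * |src z s| ≤ (1 - ψ0 R z) * (K * d z s) :=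
        mul_le_mul_of_nonneg_left (H.src_le z s) h2
    _ = K * (d z s - ψ0 R z * d z s) := by ring
  have heq : (∫ z, K * (d z s - ψ0 R z * d z s))
      = K * ((∫ z, d z s) - ∫ z, ψ0 R z * d z s) := by
    rw [MeasureTheory.integral_const_mul]
    congr 1
    exact MeasureTheory.integral_sub (H.d_int s) (H.F0_integrable R s)
  calc |∫ z, (src z s - ψ0 R z * src z s)| ≤ _ := habs
  _ ≤ _ := hmono
  _ = _ := heq

theorem src_integral_continuous (H : DensityFlux d flux src K) :
    Continuous fun s => ∫ z, src z s := by
  have hK := H.K_nonneg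
  rw [continuous_iff_continuousAt]
  intro t
  rw [Metric.continuousAt_iff]
  intro ε hε
  set Dt : ℝ := ∫ z, d z t with hDt
  have hDt0 : 0 ≤ Dt := H.dInt_nonneg t
  -- step 1 : choose δ₁
  have hc0 : ContinuousAt (fun δ : ℝ => K * ((Real.exp (K * δ) - Real.exp (-(K * δ))) * Dt)) 0 := by
    apply Continuous.continuousAt
    continuity
  rw [Metric.continuousAt_iff] at hc0
  obtain ⟨δ₀, hδ₀pos, hδ₀⟩ := hc0 (ε / 8) (by linarith)
  set δ₁ : ℝ := min (δ₀ / 2) 1 with hδ₁def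
  have hδ₁pos : 0 < δ₁ := lt_min (by linarith) one_pos
  have hδ₁ : K * ((Real.exp (K * δ₁) - Real.exp (-(K * δ₁))) * Dt) < ε / 8 := by
    have h := hδ₀ (x := δ₁) (by
      rw [Real.dist_eq, sub_zero, abs_of_pos hδ₁pos]
      calc δ₁ ≤ δ₀ / 2 := min_le_left _ _
      _ < δ₀ := by linarith)
    rw [Real.dist_eq] at h
    have : K * ((Real.exp (K * 0) - Real.exp (-(K * 0))) * Dt) = 0 := by simp
    rw [this, sub_zero] at h
    calc K * ((Real.exp (K * δ₁) - Real.exp (-(K * δ₁))) * Dt) ≤ |_| := le_abs_self _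
    _ < ε / 8 := h
  -- step 2 : choose R
  have hεK : 0 < ε / (8 * (K + 1)) := by positivity
  obtain ⟨R₀, hR₀⟩ := (Metric.tendsto_atTop.1 (H.F0_tendsto t)) (ε / (8 * (K + 1))) hεK
  set R : ℝ := R₀ + δ₁ with hRdef
  have htail_t : Dt - (∫ z, ψ0 (R - δ₁) z * d z t) < ε / (8 * (K + 1)) := by
    have h := hR₀ (R - δ₁) (by rw [hRdef]; linarith)
    rw [Real.dist_eq] at h
    calc Dt - (∫ z, ψ0 (R - δ₁) z * d z t)
        ≤ |(∫ z, ψ0 (R - δ₁) z * d z t) - Dt| := by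
          rw [abs_sub_comm]; exact le_abs_self _
    _ < ε / (8 * (K + 1)) := h
  -- step 3 : continuity of Γ0 at t
  have hΓc := (H.Γ0_cont R).continuousAt (x := t)
  rw [Metric.continuousAt_iff] at hΓc
  obtain ⟨δ₂, hδ₂pos, hδ₂⟩ := hΓc (ε / 4) (by linarith)
  refine ⟨min δ₁ δ₂, lt_min hδ₁pos hδ₂pos, ?_⟩
  intro s hs
  rw [Real.dist_eq] at hs
  have hs1 : |s - t| ≤ δ₁ := le_of_lt (lt_of_lt_of_le hs (min_le_left _ _))
  have hs2 : |s - t| < δ₂ := lt_of_lt_of_le hs (min_le_right _ _)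
  -- the tail estimate at s and at t
  have htails : ∀ u : ℝ, |u - t| ≤ δ₁ →
      K * ((∫ z, d z u) - ∫ z, ψ0 R z * d z u) < ε / 4 := by
    intro u hu
    have h := H.tail_bound R hδ₁pos.le hu
    have h2 : K * ((∫ z, d z u) - ∫ z, ψ0 R z * d z u)
        ≤ K * ((Real.exp (K * δ₁) - Real.exp (-(K * δ₁))) * Dt)
          + K * (Dt - ∫ z, ψ0 (R - δ₁) z * d z t) := by
      have := mul_le_mul_of_nonneg_left h hK
      nlinarith
    have h3 : K * (Dt - ∫ z, ψ0 (R - δ₁) z * d z t) ≤ (K + 1) * (ε / (8 * (K + 1))) := by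
      have hnn : 0 ≤ Dt - ∫ z, ψ0 (R - δ₁) z * d z t :=
        sub_nonneg.2 (H.F0_le _ t)
      nlinarith [htail_t]
    have h4 : (K + 1) * (ε / (8 * (K + 1))) = ε / 8 := by
      field_simp
    linarith
  have hbound_s : |(∫ z, src z s) - ∫ z, ψ0 R z * src z s| < ε / 4 :=
    lt_of_le_of_lt (H.Γ0_abs_diff R s) (htails s hs1)
  have hbound_t : |(∫ z, src z t) - ∫ z, ψ0 R z * src z t| < ε / 4 :=
    lt_of_le_of_lt (H.Γ0_abs_diff R t) (htails t (by simpa using hδ₁pos.le))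
  have hmid : |(∫ z, ψ0 R z * src z s) - ∫ z, ψ0 R z * src z t| < ε / 4 := by
    have := hδ₂ (x := s) (by rwa [Real.dist_eq])
    rwa [Real.dist_eq] at this
  rw [Real.dist_eq]
  calc |(∫ z, src z s) - ∫ z, src z t|
      = |((∫ z, src z s) - ∫ z, ψ0 R z * src z s)
        + ((∫ z, ψ0 R z * src z s) - ∫ z, ψ0 R z * src z t)
        + ((∫ z, ψ0 R z * src z t) - ∫ z, src z t)| := by ring_nf
  _ ≤ |((∫ z, src z s) - ∫ z, ψ0 R z * src z s)
        + ((∫ z, ψ0 R z * src z s) - ∫ z, ψ0 R z * src z t)|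
      + |(∫ z, ψ0 R z * src z t) - ∫ z, src z t| := abs_add_le _ _
  _ ≤ |(∫ z, src z s) - ∫ z, ψ0 R z * src z s|
      + |(∫ z, ψ0 R z * src z s) - ∫ z, ψ0 R z * src z t|
      + |(∫ z, ψ0 R z * src z t) - ∫ z, src z t| := by
        have := abs_add_le ((∫ z, src z s) - ∫ z, ψ0 R z * src z s)
          ((∫ z, ψ0 R z * src z s) - ∫ z, ψ0 R z * src z t)
        linarith
  _ < ε / 4 + ε / 4 + ε / 4 := by
      have h3 : |(∫ z, ψ0 R z * src z t) - ∫ z, src z t| < ε / 4 := by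
        rwa [abs_sub_comm]
      exact add_lt_add (add_lt_add hbound_s hmid) h3
  _ < ε := by linarith

theorem global_identity (H : DensityFlux d flux src K) (t : ℝ) :
    (∫ z, d z t) = (∫ z, d z 0) + ∫ s in (0:ℝ)..t, (∫ z, src z s) := by
  rcases le_total 0 t with h | h
  · have := H.identity h
    linarith
  · have := H.identity h
    rw [intervalIntegral.integral_symm]
    linarith

theorem hasDerivAt_mass (H : DensityFlux d flux src K) (t : ℝ) :
    HasDerivAt (fun u => ∫ z, d z u) (∫ z, src z t) t := by
  have hG := H.src_integral_continuous
  have hfun : (fun u => ∫ z, d z u)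
      = fun u => (∫ z, d z 0) + ∫ s in (0:ℝ)..u, (∫ z, src z s) := by
    funext u
    exact H.global_identity u
  rw [hfun]
  have hder : HasDerivAt (fun u => ∫ s in (0:ℝ)..u, (∫ z, src z s)) (∫ z, src z t) t :=
    intervalIntegral.integral_hasDerivAt_right (hG.intervalIntegrable 0 t)
      (hG.stronglyMeasurableAtFilter _ _) hG.continuousAt
  exact hder.const_add _

end DensityFlux

/-! ### elementary inequalities -/

theorem half_sq (a b : ℝ) : |a * b| ≤ (a ^ 2 + b ^ 2) / 2 := by
  rw [abs_le]
  constructor <;> nlinarith [sq_nonneg (a + b), sq_nonneg (a - b)]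

theorem abs_add6 (a b c d e f : ℝ) :
    |a + b + c + d + e + f| ≤ |a| + |b| + |c| + |d| + |e| + |f| := by
  calc |a + b + c + d + e + f| ≤ |a + b + c + d + e| + |f| := abs_add_le _ _
  _ ≤ |a + b + c + d| + |e| + |f| := by linarith [abs_add_le (a + b + c + d) e]
  _ ≤ |a + b + c| + |d| + |e| + |f| := by linarith [abs_add_le (a + b + c) d]
  _ ≤ |a + b| + |c| + |d| + |e| + |f| := by linarith [abs_add_le (a + b) c]
  _ ≤ |a| + |b| + |c| + |d| + |e| + |f| := by linarith [abs_add_le a b]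

theorem coeff_bound (c x y : ℝ) : |c * (x * y)| ≤ |c| * ((x ^ 2 + y ^ 2) / 2) := by
  rw [abs_mul]
  exact mul_le_mul_of_nonneg_left (half_sq x y) (abs_nonneg c)

open scoped Topology

set_option maxHeartbeats 4000000 in
/-- Energy estimate for the first-order AMLE system under Hypothesis N1 on the
nonlinearity `g`: the energy
`𝔈(t) = ½∫(E² + B² + P²/(n²−1) + Q²/(ω₀²(n²−1)))dz` satisfies
`d𝔈/dt ≤ C₁∫(P² + Q²)dz`, and by Gronwall
`‖u(t)‖_{L²} ≤ ‖u(0)‖_{L²} e^{C₁t}`. -/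
theorem amle_energy_estimate
    (n ω₀ ε ν k_B : ℝ) (hn : 1 < n) (hω₀ : 0 < ω₀)
    (g : ℝ → ℝ → ℝ) (Cg : ℝ)
    (hg : ∀ P z : ℝ, |g P z| + |deriv (fun z' => g P z') z| ≤ Cg * |P| ∧
      |deriv (fun p => g p z) P| ≤ Cg)
    (E B P Q : ℝ → ℝ → ℝ)
    (hregE : ContDiff ℝ 1 (fun p : ℝ × ℝ => E p.1 p.2))
    (hregB : ContDiff ℝ 1 (fun p : ℝ × ℝ => B p.1 p.2))
    (hregP : ContDiff ℝ 1 (fun p : ℝ × ℝ => P p.1 p.2))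
    (hregQ : ContDiff ℝ 1 (fun p : ℝ × ℝ => Q p.1 p.2))
    (heqE : ∀ z t : ℝ, deriv (fun s => E z s) t = deriv (fun y => B y t) z - Q z t)
    (heqB : ∀ z t : ℝ, deriv (fun s => B z s) t = deriv (fun y => E y t) z)
    (heqP : ∀ z t : ℝ, deriv (fun s => P z s) t = Q z t)
    (heqQ : ∀ z t : ℝ, deriv (fun s => Q z s) t
      = -ω₀ ^ 2 * (1 - 2 * ε * ν * Real.cos (2 * k_B * z)) * P z t
        - ω₀ ^ 2 * g (P z t) z + ω₀ ^ 2 * (n ^ 2 - 1) * E z t)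
    (hint : ∀ t : ℝ, Integrable (fun z =>
      (E z t) ^ 2 + (B z t) ^ 2 + (P z t) ^ 2 + (Q z t) ^ 2))
    (hdecay : ∀ t : ℝ,
      Filter.Tendsto (fun z => |E z t| + |B z t| + |P z t| + |Q z t|)
        Filter.atTop (nhds 0) ∧
      Filter.Tendsto (fun z => |E z t| + |B z t| + |P z t| + |Q z t|)
        Filter.atBot (nhds 0)) :
    ∃ C₁ > (0 : ℝ),
      (∀ t : ℝ, 0 ≤ t → ∃ d : ℝ,
        HasDerivAt (fun s => (1 / 2) * ∫ z : ℝ,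
          ((E z s) ^ 2 + (B z s) ^ 2 + (P z s) ^ 2 / (n ^ 2 - 1)
            + (Q z s) ^ 2 / (ω₀ ^ 2 * (n ^ 2 - 1)))) d t ∧
        d ≤ C₁ * ∫ z : ℝ, ((P z t) ^ 2 + (Q z t) ^ 2)) ∧
      (∀ t : ℝ, 0 ≤ t →
        Real.sqrt (∫ z : ℝ, ((E z t) ^ 2 + (B z t) ^ 2 + (P z t) ^ 2 + (Q z t) ^ 2))
          ≤ Real.sqrt (∫ z : ℝ,
              ((E z 0) ^ 2 + (B z 0) ^ 2 + (P z 0) ^ 2 + (Q z 0) ^ 2))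
            * Real.exp (C₁ * t)) := by
  -- basic positivity
  have hω2 : (0:ℝ) < ω₀ ^ 2 := by positivity
  have hw : (0:ℝ) < n ^ 2 - 1 := by nlinarith
  have hCg0 : 0 ≤ Cg := by
    have h := (hg 1 0).1
    have h2 := abs_nonneg (g 1 0)
    have h3 := abs_nonneg (deriv (fun z' => g 1 z') 0)
    rw [abs_one, mul_one] at h
    linarith
  -- partial derivatives, rewritten forms of the equations
  have hpdtE : ∀ z t, pdt E z t = pdz B z t - Q z t := by
    intro z t
    rw [← (hasDerivAt_pdt hregE z t).deriv, heqE z t, (hasDerivAt_pdz hregB z t).deriv]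
  have hpdtB : ∀ z t, pdt B z t = pdz E z t := by
    intro z t
    rw [← (hasDerivAt_pdt hregB z t).deriv, heqB z t, (hasDerivAt_pdz hregE z t).deriv]
  have hpdtP : ∀ z t, pdt P z t = Q z t := by
    intro z t
    rw [← (hasDerivAt_pdt hregP z t).deriv, heqP z t]
  have hpdtQ : ∀ z t, pdt Q z t
      = -ω₀ ^ 2 * (1 - 2 * ε * ν * Real.cos (2 * k_B * z)) * P z t
        - ω₀ ^ 2 * g (P z t) z + ω₀ ^ 2 * (n ^ 2 - 1) * E z t := by
    intro z t
    rw [← (hasDerivAt_pdt hregQ z t).deriv, heqQ z t]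
  -- nonlinearity bound along the solution
  have hgb : ∀ z t : ℝ, |g (P z t) z| ≤ Cg * |P z t| := by
    intro z t
    have h := (hg (P z t) z).1
    have h2 := abs_nonneg (deriv (fun z' => g (P z t) z') z)
    linarith
  -- the flux
  have hfluxcd : ContDiff ℝ 1 (fun p : ℝ × ℝ => 2 * E p.1 p.2 * B p.1 p.2) :=
    (ContDiff.mul (contDiff_const.mul hregE) hregB)
  have hpdzflux : ∀ z t, pdz (fun z t => 2 * E z t * B z t) z t
      = 2 * (pdz E z t * B z t + E z t * pdz B z t) := by
    intro z t
    have h1 : HasDerivAt (fun y => 2 * E y t * B y t)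
        (2 * (pdz E z t * B z t + E z t * pdz B z t)) z := by
      have h := ((hasDerivAt_pdz hregE z t).mul (hasDerivAt_pdz hregB z t)).const_mul 2
      have heq : (fun y => 2 * (E y t * B y t)) = fun y => 2 * E y t * B y t := by
        funext y; ring
      rw [← heq]
      exact h
    exact (hasDerivAt_pdz (f := fun z t => 2 * E z t * B z t) hfluxcd z t).unique h1
  have hfluxle : ∀ z s : ℝ, |2 * E z s * B z s|
      ≤ E z s ^ 2 + B z s ^ 2 + P z s ^ 2 + Q z s ^ 2 := by
    intro z s
    rw [abs_le]
    constructor <;> nlinarith [sq_nonneg (E z s - B z s), sq_nonneg (E z s + B z s),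
      sq_nonneg (P z s), sq_nonneg (Q z s)]
  have hfluxle' : ∀ z s : ℝ, |2 * E z s * B z s|
      ≤ E z s ^ 2 + B z s ^ 2 + P z s ^ 2 / (n ^ 2 - 1)
        + Q z s ^ 2 / (ω₀ ^ 2 * (n ^ 2 - 1)) := by
    intro z s
    have h1 : 0 ≤ P z s ^ 2 / (n ^ 2 - 1) := by positivity
    have h2 : 0 ≤ Q z s ^ 2 / (ω₀ ^ 2 * (n ^ 2 - 1)) := by positivity
    rw [abs_le]
    constructor <;> nlinarith [sq_nonneg (E z s - B z s), sq_nonneg (E z s + B z s)]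
  -- constants
  set KS : ℝ := 2 + ω₀ ^ 2 * (n ^ 2 - 1) + ω₀ ^ 2 + 2 * ω₀ ^ 2 * |ε * ν| + ω₀ ^ 2 * Cg
    with hKSdef
  have hKS0 : 0 ≤ KS := by
    have := abs_nonneg (ε * ν)
    nlinarith
  set K₀ : ℝ := (2 * |ε * ν| + Cg) / (n ^ 2 - 1) with hK₀def
  have hK₀0 : 0 ≤ K₀ := by
    have := abs_nonneg (ε * ν)
    positivity
  set Ke : ℝ := K₀ * ((n ^ 2 - 1) + ω₀ ^ 2 * (n ^ 2 - 1)) with hKedef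
  have hKe0 : 0 ≤ Ke := by
    have h1 : 0 ≤ (n ^ 2 - 1) + ω₀ ^ 2 * (n ^ 2 - 1) := by nlinarith
    exact mul_nonneg hK₀0 h1
  -- pointwise bound for the energy source
  have hsrcE_eq : ∀ z s : ℝ,
      -(2 * E z s * Q z s) + 2 * P z s * Q z s / (n ^ 2 - 1)
        + 2 * Q z s * pdt Q z s / (ω₀ ^ 2 * (n ^ 2 - 1))
      = (2 * (2 * ε * ν * Real.cos (2 * k_B * z)) * (P z s * Q z s)
          - 2 * (Q z s * g (P z s) z)) / (n ^ 2 - 1) := by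
    intro z s
    rw [hpdtQ z s]
    field_simp
    ring
  have hsrcE_bd : ∀ z s : ℝ,
      |(2 * (2 * ε * ν * Real.cos (2 * k_B * z)) * (P z s * Q z s)
          - 2 * (Q z s * g (P z s) z)) / (n ^ 2 - 1)|
        ≤ K₀ * (P z s ^ 2 + Q z s ^ 2) := by
    intro z s
    rw [abs_div, abs_of_pos hw, div_le_iff₀ hw]
    have h1 : |2 * (2 * ε * ν * Real.cos (2 * k_B * z)) * (P z s * Q z s)|
        ≤ 2 * (2 * |ε * ν|) * ((P z s ^ 2 + Q z s ^ 2) / 2) := by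
      have hc : |2 * (2 * ε * ν * Real.cos (2 * k_B * z))| ≤ 2 * (2 * |ε * ν|) := by
        have h2 : |Real.cos (2 * k_B * z)| ≤ 1 := Real.abs_cos_le_one _
        have h3 : (2:ℝ) * (2 * ε * ν * Real.cos (2 * k_B * z))
            = (4 * (ε * ν)) * Real.cos (2 * k_B * z) := by ring
        rw [h3, abs_mul]
        have h4 : |4 * (ε * ν)| = 4 * |ε * ν| := by
          rw [abs_mul]; norm_num
        rw [h4]
        nlinarith [abs_nonneg (ε * ν), abs_nonneg (Real.cos (2 * k_B * z))]
      calc |2 * (2 * ε * ν * Real.cos (2 * k_B * z)) * (P z s * Q z s)|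
          = |2 * (2 * ε * ν * Real.cos (2 * k_B * z))| * |P z s * Q z s| := abs_mul _ _
      _ ≤ (2 * (2 * |ε * ν|)) * ((P z s ^ 2 + Q z s ^ 2) / 2) := by
          apply mul_le_mul hc (half_sq _ _) (abs_nonneg _)
          positivity
    have h2 : |2 * (Q z s * g (P z s) z)| ≤ 2 * Cg * ((P z s ^ 2 + Q z s ^ 2) / 2) := by
      have h3 : |Q z s * g (P z s) z| ≤ Cg * |P z s * Q z s| := by
        rw [abs_mul, abs_mul]
        calc |Q z s| * |g (P z s) z| ≤ |Q z s| * (Cg * |P z s|) :=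
          mul_le_mul_of_nonneg_left (hgb z s) (abs_nonneg _)
        _ = Cg * (|P z s| * |Q z s|) := by ring
      have h4 : Cg * |P z s * Q z s| ≤ Cg * ((P z s ^ 2 + Q z s ^ 2) / 2) :=
        mul_le_mul_of_nonneg_left (half_sq _ _) hCg0
      calc |2 * (Q z s * g (P z s) z)| = 2 * |Q z s * g (P z s) z| := by
            rw [abs_mul]; norm_num
      _ ≤ 2 * (Cg * ((P z s ^ 2 + Q z s ^ 2) / 2)) := by linarith
      _ = 2 * Cg * ((P z s ^ 2 + Q z s ^ 2) / 2) := by ring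
    calc |2 * (2 * ε * ν * Real.cos (2 * k_B * z)) * (P z s * Q z s)
          - 2 * (Q z s * g (P z s) z)|
        ≤ |2 * (2 * ε * ν * Real.cos (2 * k_B * z)) * (P z s * Q z s)|
          + |2 * (Q z s * g (P z s) z)| := abs_sub _ _
    _ ≤ 2 * (2 * |ε * ν|) * ((P z s ^ 2 + Q z s ^ 2) / 2)
          + 2 * Cg * ((P z s ^ 2 + Q z s ^ 2) / 2) := add_le_add h1 h2
    _ = (2 * |ε * ν| + Cg) * (P z s ^ 2 + Q z s ^ 2) := by ring
    _ = K₀ * (P z s ^ 2 + Q z s ^ 2) * (n ^ 2 - 1) := by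
        rw [hK₀def]; field_simp
  -- the L² density system
  have HS : DensityFlux (fun z t => E z t ^ 2 + B z t ^ 2 + P z t ^ 2 + Q z t ^ 2)
      (fun z t => 2 * E z t * B z t)
      (fun z t => -(2 * E z t * Q z t) + 2 * P z t * Q z t + 2 * Q z t * pdt Q z t)
      KS := by
    refine ⟨?_, ?_, ?_, hfluxcd, hfluxle, ?_, ?_, hKS0, ?_⟩
    · exact ((((hregE.continuous.pow 2).add (hregB.continuous.pow 2)).add
        (hregP.continuous.pow 2)).add (hregQ.continuous.pow 2))
    · intro z s; positivity
    · exact hint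
    · exact (((continuous_const.mul hregE.continuous).mul hregQ.continuous).neg.add
        ((continuous_const.mul hregP.continuous).mul hregQ.continuous)).add
        ((continuous_const.mul hregQ.continuous).mul (continuous_pdt hregQ))
    · -- src_le
      intro z s
      rw [hpdtQ z s]
      have hXeq : -(2 * E z s * Q z s) + 2 * P z s * Q z s
          + 2 * Q z s * (-ω₀ ^ 2 * (1 - 2 * ε * ν * Real.cos (2 * k_B * z)) * P z s
            - ω₀ ^ 2 * g (P z s) z + ω₀ ^ 2 * (n ^ 2 - 1) * E z s)
          = (-2) * (E z s * Q z s)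
            + (2 * ω₀ ^ 2 * (n ^ 2 - 1)) * (E z s * Q z s)
            + 2 * (P z s * Q z s)
            + (-2 * ω₀ ^ 2) * (P z s * Q z s)
            + (4 * ω₀ ^ 2 * (ε * ν) * Real.cos (2 * k_B * z)) * (P z s * Q z s)
            + (-2 * ω₀ ^ 2) * (Q z s * g (P z s) z) := by ring
      rw [hXeq]
      have hEQ := half_sq (E z s) (Q z s)
      have hPQ := half_sq (P z s) (Q z s)
      have t1 : |(-2 : ℝ) * (E z s * Q z s)| ≤ 2 * ((E z s ^ 2 + Q z s ^ 2) / 2) := by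
        have := coeff_bound (-2) (E z s) (Q z s)
        rw [show |(-2:ℝ)| = 2 by norm_num] at this
        exact this
      have t2 : |(2 * ω₀ ^ 2 * (n ^ 2 - 1)) * (E z s * Q z s)|
          ≤ (2 * ω₀ ^ 2 * (n ^ 2 - 1)) * ((E z s ^ 2 + Q z s ^ 2) / 2) := by
        have := coeff_bound (2 * ω₀ ^ 2 * (n ^ 2 - 1)) (E z s) (Q z s)
        rwa [abs_of_nonneg (by nlinarith : (0:ℝ) ≤ 2 * ω₀ ^ 2 * (n ^ 2 - 1))] at this
      have t3 : |(2 : ℝ) * (P z s * Q z s)| ≤ 2 * ((P z s ^ 2 + Q z s ^ 2) / 2) := by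
        have := coeff_bound 2 (P z s) (Q z s)
        rwa [abs_of_nonneg (by norm_num : (0:ℝ) ≤ 2)] at this
      have t4 : |(-2 * ω₀ ^ 2) * (P z s * Q z s)|
          ≤ (2 * ω₀ ^ 2) * ((P z s ^ 2 + Q z s ^ 2) / 2) := by
        have := coeff_bound (-2 * ω₀ ^ 2) (P z s) (Q z s)
        rwa [show |(-2 * ω₀ ^ 2)| = 2 * ω₀ ^ 2 by
          rw [abs_of_nonpos (by nlinarith : -2 * ω₀ ^ 2 ≤ 0)]; ring] at this
      have t5 : |(4 * ω₀ ^ 2 * (ε * ν) * Real.cos (2 * k_B * z)) * (P z s * Q z s)|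
          ≤ (4 * ω₀ ^ 2 * |ε * ν|) * ((P z s ^ 2 + Q z s ^ 2) / 2) := by
        have h0 := coeff_bound (4 * ω₀ ^ 2 * (ε * ν) * Real.cos (2 * k_B * z)) (P z s) (Q z s)
        have h1 : |4 * ω₀ ^ 2 * (ε * ν) * Real.cos (2 * k_B * z)| ≤ 4 * ω₀ ^ 2 * |ε * ν| := by
          rw [abs_mul, abs_mul, abs_of_nonneg (by positivity : (0:ℝ) ≤ 4 * ω₀ ^ 2)]
          have h3 := mul_le_mul_of_nonneg_left (Real.abs_cos_le_one (2 * k_B * z))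
            (by positivity : (0:ℝ) ≤ 4 * ω₀ ^ 2 * |ε * ν|)
          rw [mul_one] at h3
          linarith
        calc |(4 * ω₀ ^ 2 * (ε * ν) * Real.cos (2 * k_B * z)) * (P z s * Q z s)| ≤ _ := h0
        _ ≤ (4 * ω₀ ^ 2 * |ε * ν|) * ((P z s ^ 2 + Q z s ^ 2) / 2) := by
            apply mul_le_mul_of_nonneg_right h1
            positivity
      have t6 : |(-2 * ω₀ ^ 2) * (Q z s * g (P z s) z)|
          ≤ (2 * ω₀ ^ 2) * (Cg * ((P z s ^ 2 + Q z s ^ 2) / 2)) := by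
        rw [abs_mul, show |(-2 * ω₀ ^ 2)| = 2 * ω₀ ^ 2 by
          rw [abs_of_nonpos (by nlinarith : -2 * ω₀ ^ 2 ≤ 0)]; ring]
        apply mul_le_mul_of_nonneg_left _ (by positivity : (0:ℝ) ≤ 2 * ω₀ ^ 2)
        rw [abs_mul]
        calc |Q z s| * |g (P z s) z| ≤ |Q z s| * (Cg * |P z s|) :=
            mul_le_mul_of_nonneg_left (hgb z s) (abs_nonneg _)
        _ = Cg * (|P z s| * |Q z s|) := by ring
        _ = Cg * |P z s * Q z s| := by rw [abs_mul]
        _ ≤ Cg * ((P z s ^ 2 + Q z s ^ 2) / 2) :=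
            mul_le_mul_of_nonneg_left (half_sq _ _) hCg0
      have habs := abs_add6 ((-2) * (E z s * Q z s))
        ((2 * ω₀ ^ 2 * (n ^ 2 - 1)) * (E z s * Q z s))
        (2 * (P z s * Q z s))
        ((-2 * ω₀ ^ 2) * (P z s * Q z s))
        ((4 * ω₀ ^ 2 * (ε * ν) * Real.cos (2 * k_B * z)) * (P z s * Q z s))
        ((-2 * ω₀ ^ 2) * (Q z s * g (P z s) z))
      have hB2 := sq_nonneg (B z s)
      have hE2 := sq_nonneg (E z s)
      have hP2 := sq_nonneg (P z s)
      have hQ2 := sq_nonneg (Q z s)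
      have hc1 : 0 ≤ ω₀ ^ 2 * (n ^ 2 - 1) := by nlinarith
      have hc2 : 0 ≤ ω₀ ^ 2 * |ε * ν| := by positivity
      have hc3 : 0 ≤ ω₀ ^ 2 * Cg := by positivity
      -- multiply the elementary square bounds by the nonnegative coefficients
      have m1 : (2 * ω₀ ^ 2 * (n ^ 2 - 1)) * ((E z s ^ 2 + Q z s ^ 2) / 2)
          ≤ (ω₀ ^ 2 * (n ^ 2 - 1)) * (E z s ^ 2 + B z s ^ 2 + P z s ^ 2 + Q z s ^ 2) := by
        nlinarith
      have m2 : (2 * ω₀ ^ 2) * ((P z s ^ 2 + Q z s ^ 2) / 2)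
          ≤ ω₀ ^ 2 * (E z s ^ 2 + B z s ^ 2 + P z s ^ 2 + Q z s ^ 2) := by nlinarith
      have m3 : (4 * ω₀ ^ 2 * |ε * ν|) * ((P z s ^ 2 + Q z s ^ 2) / 2)
          ≤ (2 * ω₀ ^ 2 * |ε * ν|) * (E z s ^ 2 + B z s ^ 2 + P z s ^ 2 + Q z s ^ 2) := by
        nlinarith
      have m4 : (2 * ω₀ ^ 2) * (Cg * ((P z s ^ 2 + Q z s ^ 2) / 2))
          ≤ (ω₀ ^ 2 * Cg) * (E z s ^ 2 + B z s ^ 2 + P z s ^ 2 + Q z s ^ 2) := by nlinarith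
      have m5 : 2 * ((E z s ^ 2 + Q z s ^ 2) / 2)
          ≤ E z s ^ 2 + B z s ^ 2 + P z s ^ 2 + Q z s ^ 2 := by nlinarith
      have m6 : 2 * ((P z s ^ 2 + Q z s ^ 2) / 2)
          ≤ E z s ^ 2 + B z s ^ 2 + P z s ^ 2 + Q z s ^ 2 := by nlinarith
      rw [hKSdef]
      linarith
    · -- d_deriv
      intro z t
      have hE := hasDerivAt_pdt hregE z t
      have hB := hasDerivAt_pdt hregB z t
      have hP := hasDerivAt_pdt hregP z t
      have hQ := hasDerivAt_pdt hregQ z t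
      have h := (((hE.pow 2).add (hB.pow 2)).add (hP.pow 2)).add (hQ.pow 2)
      have hval : pdz (fun z t => 2 * E z t * B z t) z t
            + (-(2 * E z t * Q z t) + 2 * P z t * Q z t + 2 * Q z t * pdt Q z t)
          = ((2 * E z t ^ 1 * pdt E z t + 2 * B z t ^ 1 * pdt B z t)
              + 2 * P z t ^ 1 * pdt P z t) + 2 * Q z t ^ 1 * pdt Q z t := by
        rw [hpdzflux z t, hpdtE z t, hpdtB z t, hpdtP z t]
        ring
      rw [hval]
      exact h
  -- the energy density system
  have He : DensityFlux (fun z t => E z t ^ 2 + B z t ^ 2 + P z t ^ 2 / (n ^ 2 - 1)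
        + Q z t ^ 2 / (ω₀ ^ 2 * (n ^ 2 - 1)))
      (fun z t => 2 * E z t * B z t)
      (fun z t => -(2 * E z t * Q z t) + 2 * P z t * Q z t / (n ^ 2 - 1)
        + 2 * Q z t * pdt Q z t / (ω₀ ^ 2 * (n ^ 2 - 1)))
      Ke := by
    refine ⟨?_, ?_, ?_, hfluxcd, hfluxle', ?_, ?_, hKe0, ?_⟩
    · exact (((hregE.continuous.pow 2).add (hregB.continuous.pow 2)).add
        ((hregP.continuous.pow 2).div_const _)).add ((hregQ.continuous.pow 2).div_const _)
    · intro z s; positivity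
    · -- integrability
      intro t
      set c₂ : ℝ := max 1 (max (1 / (n ^ 2 - 1)) (1 / (ω₀ ^ 2 * (n ^ 2 - 1)))) with hc₂
      refine Integrable.mono' ((hint t).const_mul c₂) ?_ ?_
      · exact ((((hregE.continuous.pow 2).add (hregB.continuous.pow 2)).add
          ((hregP.continuous.pow 2).div_const _)).add
          ((hregQ.continuous.pow 2).div_const _)).comp
          (continuous_id.prodMk continuous_const) |>.aestronglyMeasurable
      · apply Filter.Eventually.of_forall
        intro z
        rw [Real.norm_eq_abs, abs_of_nonneg (by positivity)]
        have hm1 : (1:ℝ) ≤ c₂ := le_max_left _ _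
        have hm2 : 1 / (n ^ 2 - 1) ≤ c₂ := le_trans (le_max_left _ _) (le_max_right _ _)
        have hm3 : 1 / (ω₀ ^ 2 * (n ^ 2 - 1)) ≤ c₂ :=
          le_trans (le_max_right _ _) (le_max_right _ _)
        have hP2 : P z t ^ 2 / (n ^ 2 - 1) = (1 / (n ^ 2 - 1)) * P z t ^ 2 := by ring
        have hQ2 : Q z t ^ 2 / (ω₀ ^ 2 * (n ^ 2 - 1))
            = (1 / (ω₀ ^ 2 * (n ^ 2 - 1))) * Q z t ^ 2 := by ring
        rw [hP2, hQ2]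
        have := sq_nonneg (E z t); have := sq_nonneg (B z t)
        have := sq_nonneg (P z t); have := sq_nonneg (Q z t)
        nlinarith [mul_le_mul_of_nonneg_right hm2 (sq_nonneg (P z t)),
          mul_le_mul_of_nonneg_right hm3 (sq_nonneg (Q z t)),
          mul_le_mul_of_nonneg_right hm1 (sq_nonneg (E z t)),
          mul_le_mul_of_nonneg_right hm1 (sq_nonneg (B z t))]
    · exact (((continuous_const.mul hregE.continuous).mul hregQ.continuous).neg.add
        ((((continuous_const.mul hregP.continuous).mul hregQ.continuous)).div_const _)).add
        ((((continuous_const.mul hregQ.continuous)).mul (continuous_pdt hregQ)).div_const _)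
    · -- src_le
      intro z s
      rw [hsrcE_eq z s]
      calc |(2 * (2 * ε * ν * Real.cos (2 * k_B * z)) * (P z s * Q z s)
            - 2 * (Q z s * g (P z s) z)) / (n ^ 2 - 1)|
          ≤ K₀ * (P z s ^ 2 + Q z s ^ 2) := hsrcE_bd z s
      _ ≤ Ke * (E z s ^ 2 + B z s ^ 2 + P z s ^ 2 / (n ^ 2 - 1)
            + Q z s ^ 2 / (ω₀ ^ 2 * (n ^ 2 - 1))) := by
          rw [hKedef]
          have h1 : P z s ^ 2 ≤ (n ^ 2 - 1)
              * (P z s ^ 2 / (n ^ 2 - 1)) := by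
            rw [mul_div_cancel₀]; exact hw.ne'
          have h2 : Q z s ^ 2 ≤ (ω₀ ^ 2 * (n ^ 2 - 1))
              * (Q z s ^ 2 / (ω₀ ^ 2 * (n ^ 2 - 1))) := by
            rw [mul_div_cancel₀]; positivity
          have hE2 := sq_nonneg (E z s); have hB2 := sq_nonneg (B z s)
          have hP2 : 0 ≤ P z s ^ 2 / (n ^ 2 - 1) := by positivity
          have hQ2 : 0 ≤ Q z s ^ 2 / (ω₀ ^ 2 * (n ^ 2 - 1)) := by positivity
          nlinarith [mul_le_mul_of_nonneg_left h1 hK₀0,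
            mul_le_mul_of_nonneg_left h2 hK₀0,
            mul_nonneg hK₀0 hE2, mul_nonneg hK₀0 hB2,
            mul_nonneg (mul_nonneg hK₀0 hω2.le) hP2,
            mul_nonneg (mul_nonneg hK₀0 hw.le) hQ2]
    · -- d_deriv
      intro z t
      have hE := hasDerivAt_pdt hregE z t
      have hB := hasDerivAt_pdt hregB z t
      have hP := hasDerivAt_pdt hregP z t
      have hQ := hasDerivAt_pdt hregQ z t
      have h := (((hE.pow 2).add (hB.pow 2)).add ((hP.pow 2).div_const (n ^ 2 - 1))).add
        ((hQ.pow 2).div_const (ω₀ ^ 2 * (n ^ 2 - 1)))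
      have hval : pdz (fun z t => 2 * E z t * B z t) z t
            + (-(2 * E z t * Q z t) + 2 * P z t * Q z t / (n ^ 2 - 1)
              + 2 * Q z t * pdt Q z t / (ω₀ ^ 2 * (n ^ 2 - 1)))
          = ((2 * E z t ^ 1 * pdt E z t + 2 * B z t ^ 1 * pdt B z t)
              + 2 * P z t ^ 1 * pdt P z t / (n ^ 2 - 1))
            + 2 * Q z t ^ 1 * pdt Q z t / (ω₀ ^ 2 * (n ^ 2 - 1)) := by
        rw [hpdzflux z t, hpdtE z t, hpdtB z t, hpdtP z t]
        ring
      rw [hval]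
      exact h
  -- conclusions
  refine ⟨K₀ + KS + 1, by linarith, ?_, ?_⟩
  · -- energy derivative estimate
    intro t ht
    refine ⟨(1/2) * ∫ z, (-(2 * E z t * Q z t) + 2 * P z t * Q z t / (n ^ 2 - 1)
      + 2 * Q z t * pdt Q z t / (ω₀ ^ 2 * (n ^ 2 - 1))), ?_, ?_⟩
    · exact (He.hasDerivAt_mass t).const_mul (1/2)
    · have hPQint : Integrable (fun z => P z t ^ 2 + Q z t ^ 2) := by
        refine Integrable.mono' (hint t) ?_ ?_
        · exact ((hregP.continuous.pow 2).add (hregQ.continuous.pow 2)).comp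
            (continuous_id.prodMk continuous_const) |>.aestronglyMeasurable
        · apply Filter.Eventually.of_forall
          intro z
          rw [Real.norm_eq_abs, abs_of_nonneg (by positivity)]
          nlinarith [sq_nonneg (E z t), sq_nonneg (B z t)]
      have h1 : (∫ z, (-(2 * E z t * Q z t) + 2 * P z t * Q z t / (n ^ 2 - 1)
            + 2 * Q z t * pdt Q z t / (ω₀ ^ 2 * (n ^ 2 - 1))))
          ≤ ∫ z, K₀ * (P z t ^ 2 + Q z t ^ 2) := by
        apply MeasureTheory.integral_mono (He.src_int t) (hPQint.const_mul K₀)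
        intro z
        dsimp only
        calc -(2 * E z t * Q z t) + 2 * P z t * Q z t / (n ^ 2 - 1)
              + 2 * Q z t * pdt Q z t / (ω₀ ^ 2 * (n ^ 2 - 1))
            ≤ |(-(2 * E z t * Q z t) + 2 * P z t * Q z t / (n ^ 2 - 1)
              + 2 * Q z t * pdt Q z t / (ω₀ ^ 2 * (n ^ 2 - 1)))| := le_abs_self _
        _ = |(2 * (2 * ε * ν * Real.cos (2 * k_B * z)) * (P z t * Q z t)
              - 2 * (Q z t * g (P z t) z)) / (n ^ 2 - 1)| := by rw [hsrcE_eq z t]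
        _ ≤ K₀ * (P z t ^ 2 + Q z t ^ 2) := hsrcE_bd z t
      have h2 : (∫ z, K₀ * (P z t ^ 2 + Q z t ^ 2)) = K₀ * ∫ z, (P z t ^ 2 + Q z t ^ 2) :=
        MeasureTheory.integral_const_mul _ _
      have h3 : 0 ≤ ∫ z, (P z t ^ 2 + Q z t ^ 2) :=
        MeasureTheory.integral_nonneg fun z => by positivity
      have h4 : (1/2 : ℝ) * (∫ z, (-(2 * E z t * Q z t) + 2 * P z t * Q z t / (n ^ 2 - 1)
            + 2 * Q z t * pdt Q z t / (ω₀ ^ 2 * (n ^ 2 - 1))))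
          ≤ (1/2) * (K₀ * ∫ z, (P z t ^ 2 + Q z t ^ 2)) := by
        rw [← h2]
        linarith
      calc (1/2 : ℝ) * (∫ z, (-(2 * E z t * Q z t) + 2 * P z t * Q z t / (n ^ 2 - 1)
            + 2 * Q z t * pdt Q z t / (ω₀ ^ 2 * (n ^ 2 - 1))))
          ≤ (1/2) * (K₀ * ∫ z, (P z t ^ 2 + Q z t ^ 2)) := h4
      _ ≤ (K₀ + KS + 1) * ∫ z, (P z t ^ 2 + Q z t ^ 2) := by nlinarith
  · -- Gronwall bound
    intro t ht
    have h := HS.global_forward (a := 0) (b := t) ht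
    rw [sub_zero] at h
    have h0 : 0 ≤ ∫ z, (E z 0 ^ 2 + B z 0 ^ 2 + P z 0 ^ 2 + Q z 0 ^ 2) :=
      MeasureTheory.integral_nonneg fun z => by positivity
    have hsq : Real.sqrt (∫ z, (E z t ^ 2 + B z t ^ 2 + P z t ^ 2 + Q z t ^ 2))
        ≤ Real.sqrt (Real.exp (KS * t) * ∫ z, (E z 0 ^ 2 + B z 0 ^ 2 + P z 0 ^ 2 + Q z 0 ^ 2)) :=
      Real.sqrt_le_sqrt h
    have hsplit : Real.sqrt (Real.exp (KS * t)
          * ∫ z, (E z 0 ^ 2 + B z 0 ^ 2 + P z 0 ^ 2 + Q z 0 ^ 2))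
        = Real.exp (KS * t / 2)
          * Real.sqrt (∫ z, (E z 0 ^ 2 + B z 0 ^ 2 + P z 0 ^ 2 + Q z 0 ^ 2)) := by
      rw [Real.sqrt_mul (Real.exp_pos _).le]
      congr 1
      rw [show Real.exp (KS * t) = (Real.exp (KS * t / 2)) ^ 2 by
        rw [sq, ← Real.exp_add]; ring_nf]
      exact Real.sqrt_sq (Real.exp_pos _).le
    have hexp : Real.exp (KS * t / 2) ≤ Real.exp ((K₀ + KS + 1) * t) := by
      apply Real.exp_le_exp.2
      nlinarith
    calc Real.sqrt (∫ z, (E z t ^ 2 + B z t ^ 2 + P z t ^ 2 + Q z t ^ 2))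
        ≤ Real.exp (KS * t / 2)
          * Real.sqrt (∫ z, (E z 0 ^ 2 + B z 0 ^ 2 + P z 0 ^ 2 + Q z 0 ^ 2)) := by
          rw [← hsplit]; exact hsq
    _ ≤ Real.sqrt (∫ z, (E z 0 ^ 2 + B z 0 ^ 2 + P z 0 ^ 2 + Q z 0 ^ 2))
          * Real.exp ((K₀ + KS + 1) * t) := by
        rw [mul_comm]
        apply mul_le_mul_of_nonneg_left hexp (Real.sqrt_nonneg _)
end PHI
end AMLEaux
end

section
/- For ω_B satisfying the Maxwell–Lorentz dispersion relation at k = k_B (minus branch) with γ_B = (n²−1)/(1 − ω_B²/ω₀²), the group velocity v_g = ω'(k_B) = 1/k'(ω_B) equals k_B(ω_B²/ω₀² − 1) / (ω_B(ω_B²/ω₀² − (1 + γ_B))). -/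
/-- For `ω_B` on the minus branch of the Maxwell–Lorentz dispersion relation
`k(ω) = √(ω²(n² − ω²/ω₀²)/(1 − ω²/ω₀²))` at `k_B = k(ω_B)`, with
`γ_B = (n²−1)/(1 − ω_B²/ω₀²)`, the group velocity `v_g = 1/k'(ω_B)` equals
`k_B(ω_B²/ω₀² − 1)/(ω_B(ω_B²/ω₀² − (1 + γ_B)))`. -/
theorem group_velocity_formula
    (n ω₀ ω_B k_B γ_B : ℝ) (hn : 1 < n) (hω₀ : 0 < ω₀)
    (hωB : 0 < ω_B) (hωB' : ω_B < ω₀)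
    (hkB : k_B = Real.sqrt (ω_B ^ 2 * (n ^ 2 - ω_B ^ 2 / ω₀ ^ 2)
      / (1 - ω_B ^ 2 / ω₀ ^ 2)))
    (hγB : γ_B = (n ^ 2 - 1) / (1 - ω_B ^ 2 / ω₀ ^ 2)) :
    deriv (fun ω : ℝ => Real.sqrt (ω ^ 2 * (n ^ 2 - ω ^ 2 / ω₀ ^ 2)
        / (1 - ω ^ 2 / ω₀ ^ 2))) ω_B ≠ 0 ∧
    (deriv (fun ω : ℝ => Real.sqrt (ω ^ 2 * (n ^ 2 - ω ^ 2 / ω₀ ^ 2)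
        / (1 - ω ^ 2 / ω₀ ^ 2))) ω_B)⁻¹
      = k_B * (ω_B ^ 2 / ω₀ ^ 2 - 1)
        / (ω_B * (ω_B ^ 2 / ω₀ ^ 2 - (1 + γ_B))) := by
  have hω0 : (ω₀ : ℝ) ≠ 0 := ne_of_gt hω₀
  have hs1 : ω_B ^ 2 / ω₀ ^ 2 < 1 := by
    rw [div_lt_one (by positivity)]
    exact pow_lt_pow_left₀ hωB' hωB.le (by norm_num)
  have hD : 0 < 1 - ω_B ^ 2 / ω₀ ^ 2 := by linarith
  have hn2 : 1 < n ^ 2 := by nlinarith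
  have hN : 0 < n ^ 2 - ω_B ^ 2 / ω₀ ^ 2 := by linarith
  have hf : 0 < ω_B ^ 2 * (n ^ 2 - ω_B ^ 2 / ω₀ ^ 2) / (1 - ω_B ^ 2 / ω₀ ^ 2) := by
    positivity
  have hOB : ω₀ ^ 2 - ω_B ^ 2 ≠ 0 := by nlinarith
  have hOB2 : -(ω_B ^ 2 * ω₀ ^ 2 * 2) + ω_B ^ 4 + ω₀ ^ 4 ≠ 0 := by
    have : -(ω_B ^ 2 * ω₀ ^ 2 * 2) + ω_B ^ 4 + ω₀ ^ 4 = (ω₀ ^ 2 - ω_B ^ 2) ^ 2 := by ring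
    rw [this]; positivity
  have hOB3 : -(ω_B ^ 2 * ω₀ ^ 6 * 2) + ω_B ^ 4 * ω₀ ^ 4 + ω₀ ^ 8 ≠ 0 := by
    have : -(ω_B ^ 2 * ω₀ ^ 6 * 2) + ω_B ^ 4 * ω₀ ^ 4 + ω₀ ^ 8 = ((ω₀ ^ 2 - ω_B ^ 2) * ω₀ ^ 2) ^ 2 := by
      ring
    rw [this]; positivity
  -- derivative of numerator
  have hnum : HasDerivAt (fun ω : ℝ => ω ^ 2 * (n ^ 2 - ω ^ 2 / ω₀ ^ 2))
      (2 * ω_B * (n ^ 2 - ω_B ^ 2 / ω₀ ^ 2) + ω_B ^ 2 * (-(2 * ω_B) / ω₀ ^ 2)) ω_B := by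
    have h1 : HasDerivAt (fun ω : ℝ => ω ^ 2) (2 * ω_B) ω_B := by
      simpa using hasDerivAt_pow 2 ω_B
    have h2 : HasDerivAt (fun ω : ℝ => n ^ 2 - ω ^ 2 / ω₀ ^ 2) (-(2 * ω_B) / ω₀ ^ 2) ω_B := by
      have := (h1.div_const (ω₀ ^ 2)).const_sub (n ^ 2)
      simpa [neg_div] using this
    exact h1.mul h2
  have hden : HasDerivAt (fun ω : ℝ => 1 - ω ^ 2 / ω₀ ^ 2) (-(2 * ω_B) / ω₀ ^ 2) ω_B := by
    have h1 : HasDerivAt (fun ω : ℝ => ω ^ 2) (2 * ω_B) ω_B := by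
      simpa using hasDerivAt_pow 2 ω_B
    have := (h1.div_const (ω₀ ^ 2)).const_sub (1 : ℝ)
    simpa [neg_div] using this
  set A : ℝ := 2 * ω_B * (n ^ 2 - ω_B ^ 2 / ω₀ ^ 2) + ω_B ^ 2 * (-(2 * ω_B) / ω₀ ^ 2) with hA
  set f' : ℝ := (A * (1 - ω_B ^ 2 / ω₀ ^ 2) -
      ω_B ^ 2 * (n ^ 2 - ω_B ^ 2 / ω₀ ^ 2) * (-(2 * ω_B) / ω₀ ^ 2)) / (1 - ω_B ^ 2 / ω₀ ^ 2) ^ 2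
    with hf'def
  have hg : HasDerivAt (fun ω : ℝ => ω ^ 2 * (n ^ 2 - ω ^ 2 / ω₀ ^ 2) / (1 - ω ^ 2 / ω₀ ^ 2))
      f' ω_B := hnum.div hden hD.ne'
  have hf' : f' = 2 * ω_B * (1 + (n ^ 2 - 1) / (1 - ω_B ^ 2 / ω₀ ^ 2) ^ 2) := by
    rw [hf'def, hA]
    rw [div_eq_iff (by positivity : (1 - ω_B ^ 2 / ω₀ ^ 2) ^ 2 ≠ 0)]
    field_simp
    ring
  have hf'pos : 0 < f' := by
    rw [hf']
    have : 0 < (n ^ 2 - 1) / (1 - ω_B ^ 2 / ω₀ ^ 2) ^ 2 :=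
      div_pos (by nlinarith) (by positivity)
    nlinarith
  have hsqrt : HasDerivAt (fun ω : ℝ => Real.sqrt (ω ^ 2 * (n ^ 2 - ω ^ 2 / ω₀ ^ 2)
      / (1 - ω ^ 2 / ω₀ ^ 2)))
      (1 / (2 * Real.sqrt (ω_B ^ 2 * (n ^ 2 - ω_B ^ 2 / ω₀ ^ 2) / (1 - ω_B ^ 2 / ω₀ ^ 2))) * f')
      ω_B := (Real.hasDerivAt_sqrt hf.ne').comp ω_B hg
  have hderiv := hsqrt.deriv
  rw [hderiv, ← hkB]
  have hkpos : 0 < k_B := hkB ▸ Real.sqrt_pos.mpr hf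
  have hdpos : 0 < 1 / (2 * k_B) * f' :=
    mul_pos (div_pos one_pos (by linarith)) hf'pos
  have hdne : 1 / (2 * k_B) * f' ≠ 0 := hdpos.ne'
  refine ⟨hdne, ?_⟩
  have hγpos : 0 < (n ^ 2 - 1) / (1 - ω_B ^ 2 / ω₀ ^ 2) := div_pos (by nlinarith) hD
  have hγden : ω_B ^ 2 / ω₀ ^ 2 - (1 + γ_B) ≠ 0 := by
    rw [hγB]; exact ne_of_lt (by linarith)
  have hYne : ω_B * (ω_B ^ 2 / ω₀ ^ 2 - (1 + γ_B)) ≠ 0 := mul_ne_zero hωB.ne' hγden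
  have hmain : (1 / (2 * k_B) * f') * (k_B * (ω_B ^ 2 / ω₀ ^ 2 - 1))
      = ω_B * (ω_B ^ 2 / ω₀ ^ 2 - (1 + γ_B)) := by
    rw [hf', hγB]
    field_simp
    ring
  rw [eq_div_iff hYne, ← hmain, inv_mul_cancel_left₀ hdne]
end

section
/- Let ζ(t) ≥ 0 satisfy the differential inequality dζ/dt ≤ Cε(1 + ζ + εζ³) with ζ(0) = ζ₀ > 0. Then for any T₀ > 0 there exist ε₀ > 0 and a constant C(T₀, ζ₀) such that for all 0 < ε ≤ ε₀ and all 0 ≤ t ≤ T₀/ε, ζ(t) ≤ C(T₀, ζ₀). -/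
/-!
As long as `ε ζ³ ≤ 1`, the inequality is linear, `ζ' ≤ Cε (ζ + 2)`, so `ζ` stays below the
barrier `(ζ₀ + 2) e^{2Cεt} - 2`, which on `[0, T₀/ε]` is at most `M = (ζ₀ + 2) e^{2CT₀}`, a bound
independent of `ε`. Taking `ε₀ = M⁻³` makes `ε ζ³ ≤ 1` hold wherever `ζ` touches the barrier, and
the strict fencing theorem for barriers turns this into `ζ ≤ M` on the whole interval.
-/

open Set Real

theorem image_le_of_hasDerivAt_lt_deriv_boundary {f B B' : ℝ → ℝ} {a b : ℝ}
    (hB : ∀ x, HasDerivAt B (B' x) x) (ha : f a ≤ B a)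
    (hf : ∀ x ∈ Icc a b, ∃ d, HasDerivAt f d x ∧ (f x = B x → d < B' x)) :
    ∀ ⦃x⦄, x ∈ Icc a b → f x ≤ B x := by
  choose! f' hf' bound using hf
  exact image_le_of_deriv_right_lt_deriv_boundary
    (fun x hx => (hf' x hx).continuousAt.continuousWithinAt)
    (fun x hx => (hf' x (Ico_subset_Icc_self hx)).hasDerivWithinAt) ha hB
    (fun x hx => bound x (Ico_subset_Icc_self hx))

/-- The rate `2κ` instead of `κ` makes the barrier strict. -/
theorem image_le_exp_barrier_of_deriv_le_affine {f : ℝ → ℝ} {κ c δ T : ℝ} (hκ : 0 < κ)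
    (hδc : 0 < δ + c) (h0 : f 0 ≤ δ)
    (hf : ∀ x ∈ Icc 0 T, ∃ d, HasDerivAt f d x ∧
      (f x = (δ + c) * exp (2 * κ * x) - c → d ≤ κ * (f x + c))) :
    ∀ x ∈ Icc 0 T, f x ≤ (δ + c) * exp (2 * κ * x) - c := by
  have hB : ∀ x, HasDerivAt (fun x => (δ + c) * exp (2 * κ * x) - c)
      ((δ + c) * (exp (2 * κ * x) * (2 * κ * 1))) x := fun x =>
    (((hasDerivAt_id x).const_mul (2 * κ)).exp.const_mul (δ + c)).sub_const c
  refine image_le_of_hasDerivAt_lt_deriv_boundary hB (by simpa using h0) fun x hx => ?_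
  obtain ⟨d, hd, hle⟩ := hf x hx
  refine ⟨d, hd, fun heq => ?_⟩
  have hpos : 0 < (δ + c) * exp (2 * κ * x) := by positivity
  calc d ≤ κ * (f x + c) := hle heq
    _ = κ * ((δ + c) * exp (2 * κ * x)) := by rw [heq]; ring
    _ < (δ + c) * (exp (2 * κ * x) * (2 * κ * 1)) := by nlinarith

theorem gronwall_error_bound_general
    (C T₀ ζ₀ : ℝ) (hC : 0 < C) (hζ₀ : 0 < ζ₀) :
    ∃ ε₀ > (0 : ℝ), ∃ K : ℝ, ∀ ε : ℝ, 0 < ε → ε ≤ ε₀ →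
      ∀ ζ : ℝ → ℝ, ζ 0 = ζ₀ →
        (∀ t ∈ Icc (0 : ℝ) (T₀ / ε), 0 ≤ ζ t) →
        (∀ t ∈ Icc (0 : ℝ) (T₀ / ε), ∃ d : ℝ,
          HasDerivAt ζ d t ∧ d ≤ C * ε * (1 + ζ t + ε * (ζ t) ^ 3)) →
        ∀ t ∈ Icc (0 : ℝ) (T₀ / ε), ζ t ≤ K := by
  set M := (ζ₀ + 2) * exp (2 * C * T₀)
  have hM : 0 < M := by positivity
  refine ⟨(M ^ 3)⁻¹, by positivity, M, fun ε hε hεε₀ ζ hζ0 hnn hderiv t ht => ?_⟩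
  have barrier_le : ∀ x ∈ Icc 0 (T₀ / ε), (ζ₀ + 2) * exp (2 * (C * ε) * x) - 2 ≤ M := by
    intro x hx
    have hεx : x * ε ≤ T₀ := (le_div_iff₀ hε).mp hx.2
    calc (ζ₀ + 2) * exp (2 * (C * ε) * x) - 2 ≤ (ζ₀ + 2) * exp (2 * (C * ε) * x) := by linarith
      _ ≤ (ζ₀ + 2) * exp (2 * C * T₀) := by
        gcongr (ζ₀ + 2) * exp ?_; nlinarith
  refine (image_le_exp_barrier_of_deriv_le_affine (mul_pos hC hε) (by linarith) hζ0.le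
    (fun x hx => ?_) t ht).trans (barrier_le t ht)
  obtain ⟨d, hd, hdle⟩ := hderiv x hx
  refine ⟨d, hd, fun heq => ?_⟩
  have hζM : ζ x ≤ M := heq.trans_le (barrier_le x hx)
  have hcube : ε * ζ x ^ 3 ≤ 1 := calc
    ε * ζ x ^ 3 ≤ (M ^ 3)⁻¹ * M ^ 3 :=
      mul_le_mul hεε₀ (pow_le_pow_left₀ (hnn x hx) hζM 3) (pow_nonneg (hnn x hx) 3) (by positivity)
    _ = 1 := inv_mul_cancel₀ (by positivity)
  calc d ≤ C * ε * (1 + ζ x + ε * ζ x ^ 3) := hdle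
    _ ≤ C * ε * (ζ x + 2) := mul_le_mul_of_nonneg_left (by linarith) (by positivity)

/-- Gronwall-type estimate for the differential inequality
`dζ/dt ≤ Cε(1 + ζ + εζ³)`: for any `T₀ > 0` there are `ε₀ > 0` and a constant
`K = C(T₀, ζ₀)` such that for all `0 < ε ≤ ε₀` every nonnegative solution with
`ζ(0) = ζ₀ > 0` satisfies `ζ(t) ≤ K` for `0 ≤ t ≤ T₀/ε`. -/
theorem gronwall_error_bound
    (C T₀ ζ₀ : ℝ) (hC : 0 < C) (hT₀ : 0 < T₀) (hζ₀ : 0 < ζ₀) :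
    ∃ ε₀ > (0 : ℝ), ∃ K : ℝ, ∀ ε : ℝ, 0 < ε → ε ≤ ε₀ →
      ∀ ζ : ℝ → ℝ, ζ 0 = ζ₀ →
        (∀ t ∈ Icc (0 : ℝ) (T₀ / ε), 0 ≤ ζ t) →
        (∀ t ∈ Icc (0 : ℝ) (T₀ / ε), ∃ d : ℝ,
          HasDerivAt ζ d t ∧ d ≤ C * ε * (1 + ζ t + ε * (ζ t) ^ 3)) →
        ∀ t ∈ Icc (0 : ℝ) (T₀ / ε), ζ t ≤ K :=
  gronwall_error_bound_general C T₀ ζ₀ hC hζ₀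
end
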